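/- Let q : ℰ → T be a ℬ–𝒞 equivalence between Fell bundles p_ℬ : ℬ → H and p_𝒞 : 𝒞 → K over an (H,K)-equivalence T, and let ℳ be a full Banach ℬ–𝒞 submodule of ℰ. For t ∈ T let R_t = closure of span ⟨E_t, M_t⟩_𝒞 (an ideal of the C*-algebra C_{σ(t)}) and L_t = closure of span ⟨M_t, E_t⟩_ℬ (an ideal of B_{ρ(t)}). Then R_t depends only on σ(t) — that is, σ(t) = σ(t') implies R_t = R_{t'} — and L_t depends only on ρ(t). -/

import Mathlib

noncomputable section

open Filter Topology

namespace FellRieffel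

/-! ### Banach bundles (upper-semicontinuous Banach bundles), total-space picture.

A Banach bundle over `X` is given by a total space `B`, a projection, a fibrewise
addition and scalar multiplication, a norm, and a zero section.  The fibrewise
operations are recorded as total functions on the total space; all axioms are imposed
only on members of a common fibre, so the values elsewhere are irrelevant junk. -/

/-- The data of a Banach bundle: projection, fibrewise addition, fibrewise scalar
multiplication, norm, and zero section. -/
structure BanachBundleData (X B : Type*) where
  proj : B → X
  add : B → B → B
  smul : ℂ → B → B
  norm : B → ℝ
  zero : X → B

namespace BanachBundleData

variable {X B : Type*} (D : BanachBundleData X B)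

/-- `b - b'` computed fibrewise. -/
def sub (a b : B) : B := D.add a (D.smul (-1) b)

/-- The sum of a list of elements of the fibre over `x`. -/
def fibSum (x : X) : List B → B
  | [] => D.zero x
  | b :: l => D.add b (fibSum x l)

/-- The fibre of the bundle over `x`. -/
def Fib (x : X) : Type _ := {b : B // D.proj b = x}

/-- A subset `S` of the fibre over `x` is (sequentially) closed in the fibre norm. -/
def FibClosed (x : X) (S : Set B) : Prop :=
  ∀ (u : ℕ → B) (b : B), (∀ n, u n ∈ S) → D.proj b = x →
    Tendsto (fun n => D.norm (D.sub (u n) b)) atTop (𝓝 0) → b ∈ S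

end BanachBundleData

/-- A subset `S` of the total space is a closed linear subspace of the fibre over `x`. -/
structure FibClosedSubspace {X B : Type*} (D : BanachBundleData X B) (x : X) (S : Set B) :
    Prop where
  proj_mem : ∀ b ∈ S, D.proj b = x
  zero_mem : D.zero x ∈ S
  add_mem : ∀ a ∈ S, ∀ b ∈ S, D.add a b ∈ S
  smul_mem : ∀ (c : ℂ), ∀ b ∈ S, D.smul c b ∈ S
  closed : D.FibClosed x S

/-- The axioms making `D : BanachBundleData X B` an (upper-semicontinuous) Banach
bundle over `X`. -/
structure IsBanachBundle {X B : Type*} [TopologicalSpace X] [TopologicalSpace B]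
    (D : BanachBundleData X B) : Prop where
  continuous_proj : Continuous D.proj
  isOpenMap_proj : IsOpenMap D.proj
  surjective_proj : Function.Surjective D.proj
  proj_zero : ∀ x, D.proj (D.zero x) = x
  proj_add : ∀ a b, D.proj a = D.proj b → D.proj (D.add a b) = D.proj a
  proj_smul : ∀ c b, D.proj (D.smul c b) = D.proj b
  -- each fibre is a complex vector space
  add_comm : ∀ a b, D.proj a = D.proj b → D.add a b = D.add b a
  add_assoc : ∀ a b c, D.proj a = D.proj b → D.proj b = D.proj c →
    D.add (D.add a b) c = D.add a (D.add b c)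
  zero_add : ∀ b, D.add (D.zero (D.proj b)) b = b
  neg_add_cancel : ∀ b, D.add (D.smul (-1) b) b = D.zero (D.proj b)
  one_smul : ∀ b, D.smul 1 b = b
  mul_smul : ∀ (c d : ℂ) b, D.smul (c * d) b = D.smul c (D.smul d b)
  smul_add : ∀ (c : ℂ) a b, D.proj a = D.proj b →
    D.smul c (D.add a b) = D.add (D.smul c a) (D.smul c b)
  add_smul : ∀ (c d : ℂ) b, D.smul (c + d) b = D.add (D.smul c b) (D.smul d b)
  -- each fibre is normed
  norm_nonneg : ∀ b, 0 ≤ D.norm b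
  norm_zero : ∀ x, D.norm (D.zero x) = 0
  eq_zero_of_norm_eq_zero : ∀ b, D.norm b = 0 → b = D.zero (D.proj b)
  norm_add_le : ∀ a b, D.proj a = D.proj b → D.norm (D.add a b) ≤ D.norm a + D.norm b
  norm_smul : ∀ (c : ℂ) b, D.norm (D.smul c b) = ‖c‖ * D.norm b
  -- each fibre is complete
  complete : ∀ (x : X) (u : ℕ → B), (∀ n, D.proj (u n) = x) →
    (∀ ε > 0, ∃ N, ∀ m ≥ N, ∀ n ≥ N, D.norm (D.sub (u m) (u n)) < ε) →
    ∃ b, D.proj b = x ∧ Tendsto (fun n => D.norm (D.sub (u n) b)) atTop (𝓝 0)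
  -- (B1): upper semicontinuity of the norm
  usc_norm : ∀ r : ℝ, IsOpen {b : B | D.norm b < r}
  -- (B2): continuity of fibrewise addition
  continuous_add :
    Continuous (fun p : {p : B × B // D.proj p.1 = D.proj p.2} => D.add p.1.1 p.1.2)
  -- (B3): continuity of scalar multiplication
  continuous_smul : Continuous (fun p : ℂ × B => D.smul p.1 p.2)
  -- (B4): if `p (bᵢ) → x` and `‖bᵢ‖ → 0` then `bᵢ → 0ₓ`
  tendsto_zero : ∀ {ι : Type*} (l : Filter ι) (b : ι → B) (x : X),
    Tendsto (fun i => D.proj (b i)) l (𝓝 x) →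
    Tendsto (fun i => D.norm (b i)) l (𝓝 (0 : ℝ)) →
    Tendsto b l (𝓝 (D.zero x))

/-- A continuous section of the bundle. -/
def IsSection {X B : Type*} [TopologicalSpace X] [TopologicalSpace B]
    (D : BanachBundleData X B) (f : X → B) : Prop :=
  Continuous f ∧ ∀ x, D.proj (f x) = x

/-- The section `f` is compactly supported. -/
def HasCompactSupportSection {X B : Type*} [TopologicalSpace X]
    (D : BanachBundleData X B) (f : X → B) : Prop :=
  ∃ K : Set X, IsCompact K ∧ ∀ x ∉ K, f x = D.zero x

/-- `C` is a Banach subbundle of the bundle `D`: its fibres are closed linear subspaces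
of the fibres of `D`, and the restriction of the projection to `C` (with the relative
topology) is an open map; by Remark 2.8 of the paper this makes `C`, with the relative
topology and the inherited structure, a Banach bundle. -/
structure IsSubbundle {X B : Type*} [TopologicalSpace X] [TopologicalSpace B]
    (D : BanachBundleData X B) (C : Set B) : Prop where
  fib_closedSubspace : ∀ x : X, FibClosedSubspace D x (C ∩ {b | D.proj b = x})
  isOpenMap_restrict : IsOpenMap (fun c : C => D.proj c.1)

/-- The norm-closure of the (ℂ-linear span of the) set `{b ∈ fibre x | P b}` inside the
fibre over `x`, described concretely: the elements of the fibre over `x` which can be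
approximated in norm by finite sums of elements satisfying `P`.  (This agrees with the
closed linear span whenever the class `P` is stable under scalar multiples, as is the
case for all the classes of products to which we apply it.) -/
def fibSpanApprox {X B : Type*} (D : BanachBundleData X B) (x : X) (P : B → Prop) :
    Set B :=
  {c : B | D.proj c = x ∧ ∀ ε > 0, ∃ l : List B, (∀ b ∈ l, P b) ∧
    D.norm (D.sub c (D.fibSum x l)) < ε}

end FellRieffel

namespace FellRieffel

/-! ### Topological groupoids -/

/-- An (algebraic) groupoid structure on a type `G`, with units identified with elements
of `G`: range and source maps, a partially defined multiplication (recorded as a total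
function; its values on non-composable pairs are irrelevant junk, as all axioms are
conditional on composability), and inversion. -/
structure GroupoidStr (G : Type*) where
  src : G → G
  rng : G → G
  mul : G → G → G
  inv : G → G
  src_src : ∀ g, src (src g) = src g
  rng_src : ∀ g, rng (src g) = src g
  src_rng : ∀ g, src (rng g) = rng g
  rng_rng : ∀ g, rng (rng g) = rng g
  rng_mul : ∀ g h, src g = rng h → rng (mul g h) = rng g
  src_mul : ∀ g h, src g = rng h → src (mul g h) = src h
  mul_assoc : ∀ g h k, src g = rng h → src h = rng k →
    mul (mul g h) k = mul g (mul h k)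
  id_mul : ∀ g, mul (rng g) g = g
  mul_id : ∀ g, mul g (src g) = g
  src_inv : ∀ g, src (inv g) = rng g
  rng_inv : ∀ g, rng (inv g) = src g
  inv_inv : ∀ g, inv (inv g) = g
  inv_mul : ∀ g, mul (inv g) g = src g
  mul_inv : ∀ g, mul g (inv g) = rng g

/-- `u` is a unit of the groupoid. -/
def GroupoidStr.IsUnit {G : Type*} (𝒢 : GroupoidStr G) (u : G) : Prop := 𝒢.src u = u

/-- The groupoid operations are compatible with a topology on `G`. -/
structure IsTopGroupoid {G : Type*} [TopologicalSpace G] (𝒢 : GroupoidStr G) : Prop where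
  continuous_mul :
    Continuous (fun p : {p : G × G // 𝒢.src p.1 = 𝒢.rng p.2} => 𝒢.mul p.1.1 p.1.2)
  continuous_inv : Continuous 𝒢.inv

/-! ### Fell bundles over groupoids -/

/-- The data of a Fell bundle over a groupoid: Banach-bundle data together with a
(partially defined, recorded as total) multiplication and an involution on the total
space. -/
structure FellBundleData (G B : Type*) extends BanachBundleData G B where
  mul : B → B → B
  star : B → B

/-- The axioms making `D : FellBundleData G 𝒢 B` a (saturated) Fell bundle over the
topological groupoid `(G, 𝒢)`. -/
structure IsFellBundle {G B : Type*} [TopologicalSpace G] [TopologicalSpace B]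
    (𝒢 : GroupoidStr G) (D : FellBundleData G B)
    extends IsBanachBundle D.toBanachBundleData : Prop where
  -- (FB1), (FB2)
  proj_mul : ∀ a b, 𝒢.src (D.proj a) = 𝒢.rng (D.proj b) →
    D.proj (D.mul a b) = 𝒢.mul (D.proj a) (D.proj b)
  proj_star : ∀ a, D.proj (D.star a) = 𝒢.inv (D.proj a)
  -- continuity of the operations
  continuous_mul : Continuous
    (fun p : {p : B × B // 𝒢.src (D.proj p.1) = 𝒢.rng (D.proj p.2)} => D.mul p.1.1 p.1.2)
  continuous_star : Continuous D.star
  -- bilinearity and associativity of the multiplication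
  mul_add : ∀ a b c, 𝒢.src (D.proj a) = 𝒢.rng (D.proj b) → D.proj b = D.proj c →
    D.mul a (D.add b c) = D.add (D.mul a b) (D.mul a c)
  add_mul : ∀ a b c, D.proj a = D.proj b → 𝒢.src (D.proj a) = 𝒢.rng (D.proj c) →
    D.mul (D.add a b) c = D.add (D.mul a c) (D.mul b c)
  smul_mul : ∀ (z : ℂ) a b, 𝒢.src (D.proj a) = 𝒢.rng (D.proj b) →
    D.mul (D.smul z a) b = D.smul z (D.mul a b)
  mul_smul' : ∀ (z : ℂ) a b, 𝒢.src (D.proj a) = 𝒢.rng (D.proj b) →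
    D.mul a (D.smul z b) = D.smul z (D.mul a b)
  mul_assoc' : ∀ a b c, 𝒢.src (D.proj a) = 𝒢.rng (D.proj b) →
    𝒢.src (D.proj b) = 𝒢.rng (D.proj c) →
    D.mul (D.mul a b) c = D.mul a (D.mul b c)
  -- (FB3) and the involutive *-structure
  star_star : ∀ a, D.star (D.star a) = a
  star_add : ∀ a b, D.proj a = D.proj b → D.star (D.add a b) = D.add (D.star a) (D.star b)
  star_smul : ∀ (z : ℂ) a, D.star (D.smul z a) = D.smul (starRingEnd ℂ z) (D.star a)
  star_mul' : ∀ a b, 𝒢.src (D.proj a) = 𝒢.rng (D.proj b) →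
    D.star (D.mul a b) = D.mul (D.star b) (D.star a)
  -- norm conditions: submultiplicativity and the C*-identity (FB4)/(FB5)
  norm_mul_le : ∀ a b, 𝒢.src (D.proj a) = 𝒢.rng (D.proj b) →
    D.norm (D.mul a b) ≤ D.norm a * D.norm b
  norm_star_mul_self : ∀ a, D.norm (D.mul (D.star a) a) = D.norm a ^ 2
  -- positivity of `a* a` in the C*-algebra over the unit `s (p a)` (FB5)
  star_mul_self_pos : ∀ a, ∃ c, D.proj c = 𝒢.src (D.proj a) ∧
    D.mul (D.star a) a = D.mul (D.star c) c
  -- saturation/fullness (FB5): `span B_g* B_g` is dense in `B_{s(g)}` and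
  -- `span B_g B_g*` is dense in `B_{r(g)}`
  full_src : ∀ g : G, ∀ c, D.proj c = 𝒢.src g →
    c ∈ fibSpanApprox D.toBanachBundleData (𝒢.src g)
      (fun z => ∃ a b, D.proj a = g ∧ D.proj b = g ∧ z = D.mul (D.star a) b)
  full_rng : ∀ g : G, ∀ c, D.proj c = 𝒢.rng g →
    c ∈ fibSpanApprox D.toBanachBundleData (𝒢.rng g)
      (fun z => ∃ a b, D.proj a = g ∧ D.proj b = g ∧ z = D.mul a (D.star b))

variable {G B : Type*}

/-- A Fell subbundle: a Banach subbundle closed under multiplication and involution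
which is a Fell bundle under the inherited operations (the only non-automatic part of
the latter being the fullness (FB5) of the fibres of the subbundle over its own unit
fibres). -/
structure IsFellSubbundle [TopologicalSpace G] [TopologicalSpace B]
    (𝒢 : GroupoidStr G) (D : FellBundleData G B) (J : Set B) : Prop where
  subbundle : IsSubbundle D.toBanachBundleData J
  mul_mem : ∀ a ∈ J, ∀ b ∈ J, 𝒢.src (D.proj a) = 𝒢.rng (D.proj b) → D.mul a b ∈ J
  star_mem : ∀ a ∈ J, D.star a ∈ J
  full_src : ∀ g : G, ∀ c ∈ J, D.proj c = 𝒢.src g →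
    c ∈ fibSpanApprox D.toBanachBundleData (𝒢.src g)
      (fun z => ∃ a ∈ J, ∃ b ∈ J, D.proj a = g ∧ D.proj b = g ∧ z = D.mul (D.star a) b)
  full_rng : ∀ g : G, ∀ c ∈ J, D.proj c = 𝒢.rng g →
    c ∈ fibSpanApprox D.toBanachBundleData (𝒢.rng g)
      (fun z => ∃ a ∈ J, ∃ b ∈ J, D.proj a = g ∧ D.proj b = g ∧ z = D.mul a (D.star b))

/-- An ideal of a Fell bundle: a Fell subbundle absorbing under multiplication. -/
structure IsFellIdeal [TopologicalSpace G] [TopologicalSpace B]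
    (𝒢 : GroupoidStr G) (D : FellBundleData G B) (J : Set B) : Prop where
  fellSubbundle : IsFellSubbundle 𝒢 D J
  mul_mem_left : ∀ a b, 𝒢.src (D.proj a) = 𝒢.rng (D.proj b) → a ∈ J → D.mul a b ∈ J
  mul_mem_right : ∀ a b, 𝒢.src (D.proj a) = 𝒢.rng (D.proj b) → b ∈ J → D.mul a b ∈ J

/-- A weak ideal of a Fell bundle: a Banach subbundle absorbing under multiplication. -/
structure IsWeakFellIdeal [TopologicalSpace G] [TopologicalSpace B]
    (𝒢 : GroupoidStr G) (D : FellBundleData G B) (J : Set B) : Prop where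
  subbundle : IsSubbundle D.toBanachBundleData J
  mul_mem_left : ∀ a b, 𝒢.src (D.proj a) = 𝒢.rng (D.proj b) → a ∈ J → D.mul a b ∈ J
  mul_mem_right : ∀ a b, 𝒢.src (D.proj a) = 𝒢.rng (D.proj b) → b ∈ J → D.mul a b ∈ J

end FellRieffel

namespace FellRieffel

/-! ### Equivalences of groupoids -/

/-- The data of an `(H,K)`-equivalence `T`: moment maps `ρ : T → H⁰ ⊆ H` and
`σ : T → K⁰ ⊆ K`, a left `H`-action and a right `K`-action (recorded as total
functions, junk off the composable sets), and the translation maps `τH`, `τK`. -/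
structure GroupoidEquivData (H K T : Type*) where
  ρ : T → H
  σ : T → K
  lact : H → T → T
  ract : T → K → T
  τH : T → T → H
  τK : T → T → K

/-- The axioms of an `(H,K)`-equivalence of topological groupoids: `T` is a free left
`H`-space and a free right `K`-space with commuting actions and open continuous moment
maps `ρ`, `σ` (onto the unit spaces) which induce bijections `T/K ≅ H⁰` and `H\T ≅ K⁰`;
the latter is encoded by the continuous open translation maps `τH` (defined for pairs
with `σ t = σ t'`, with `τH t t' · t' = t`) and `τK` (defined for pairs with
`ρ t = ρ t'`, with `t · τK t t' = t'`). -/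
structure IsGroupoidEquiv {H K T : Type*} [TopologicalSpace H] [TopologicalSpace K]
    [TopologicalSpace T] (𝒢H : GroupoidStr H) (𝒢K : GroupoidStr K)
    (E : GroupoidEquivData H K T) : Prop where
  ρ_unit : ∀ t, 𝒢H.IsUnit (E.ρ t)
  σ_unit : ∀ t, 𝒢K.IsUnit (E.σ t)
  continuous_ρ : Continuous E.ρ
  continuous_σ : Continuous E.σ
  isOpenMap_ρ : IsOpenMap E.ρ
  isOpenMap_σ : IsOpenMap E.σ
  surj_ρ : ∀ u : H, 𝒢H.IsUnit u → ∃ t, E.ρ t = u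
  surj_σ : ∀ u : K, 𝒢K.IsUnit u → ∃ t, E.σ t = u
  continuous_lact :
    Continuous (fun p : {p : H × T // 𝒢H.src p.1 = E.ρ p.2} => E.lact p.1.1 p.1.2)
  continuous_ract :
    Continuous (fun p : {p : T × K // E.σ p.1 = 𝒢K.rng p.2} => E.ract p.1.1 p.1.2)
  ρ_lact : ∀ h t, 𝒢H.src h = E.ρ t → E.ρ (E.lact h t) = 𝒢H.rng h
  σ_lact : ∀ h t, 𝒢H.src h = E.ρ t → E.σ (E.lact h t) = E.σ t
  ρ_ract : ∀ t k, E.σ t = 𝒢K.rng k → E.ρ (E.ract t k) = E.ρ t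
  σ_ract : ∀ t k, E.σ t = 𝒢K.rng k → E.σ (E.ract t k) = 𝒢K.src k
  lact_id : ∀ t, E.lact (E.ρ t) t = t
  lact_mul : ∀ h h' t, 𝒢H.src h = 𝒢H.rng h' → 𝒢H.src h' = E.ρ t →
    E.lact (𝒢H.mul h h') t = E.lact h (E.lact h' t)
  ract_id : ∀ t, E.ract t (E.σ t) = t
  ract_mul : ∀ t k k', E.σ t = 𝒢K.rng k → 𝒢K.src k = 𝒢K.rng k' →
    E.ract t (𝒢K.mul k k') = E.ract (E.ract t k) k'
  lact_ract : ∀ h t k, 𝒢H.src h = E.ρ t → E.σ t = 𝒢K.rng k →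
    E.lact h (E.ract t k) = E.ract (E.lact h t) k
  free_l : ∀ h t, 𝒢H.src h = E.ρ t → E.lact h t = t → h = E.ρ t
  free_r : ∀ t k, E.σ t = 𝒢K.rng k → E.ract t k = t → k = E.σ t
  τH_src : ∀ t t', E.σ t = E.σ t' → 𝒢H.src (E.τH t t') = E.ρ t'
  τH_spec : ∀ t t', E.σ t = E.σ t' → E.lact (E.τH t t') t' = t
  τK_rng : ∀ t t', E.ρ t = E.ρ t' → 𝒢K.rng (E.τK t t') = E.σ t
  τK_spec : ∀ t t', E.ρ t = E.ρ t' → E.ract t (E.τK t t') = t'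
  continuous_τH :
    Continuous (fun p : {p : T × T // E.σ p.1 = E.σ p.2} => E.τH p.1.1 p.1.2)
  continuous_τK :
    Continuous (fun p : {p : T × T // E.ρ p.1 = E.ρ p.2} => E.τK p.1.1 p.1.2)
  isOpenMap_τH : IsOpenMap (fun p : {p : T × T // E.σ p.1 = E.σ p.2} => E.τH p.1.1 p.1.2)
  isOpenMap_τK : IsOpenMap (fun p : {p : T × T // E.ρ p.1 = E.ρ p.2} => E.τK p.1.1 p.1.2)

/-! ### Equivalences of Fell bundles -/

/-- The data of a `ℬ`–`𝒞` equivalence: a Banach bundle `q : ℰ → T` together with a left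
`ℬ`-action, a right `𝒞`-action, and `ℬ`- and `𝒞`-valued inner products (all recorded as
total functions; values off the composable sets are irrelevant junk). -/
structure FellEquivData (T BB CC EE : Type*) where
  bund : BanachBundleData T EE
  lact : BB → EE → EE
  ract : EE → CC → EE
  linner : EE → EE → BB
  rinner : EE → EE → CC

/-- The complete setting of Section 3 of the paper: Fell bundles `p_ℬ : ℬ → H` and
`p_𝒞 : 𝒞 → K` over an `(H,K)`-equivalence `T`, and equivalence data `q : ℰ → T`. -/
structure EquivSetup (H K T BB CC EE : Type*) where
  𝒢H : GroupoidStr H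
  𝒢K : GroupoidStr K
  DB : FellBundleData H BB
  DC : FellBundleData K CC
  Teq : GroupoidEquivData H K T
  FE : FellEquivData T BB CC EE

universe v₁ v₂ v₃

variable {H K T BB CC EE : Type*}

namespace EquivSetup

variable (S : EquivSetup H K T BB CC EE)

/-- Projection of the bundle `ℰ`. -/
def q : EE → T := S.FE.bund.proj

/-- The axioms making `S.FE` a `ℬ`–`𝒞` equivalence of Fell bundles
(Definition 2.14 of the paper). -/
structure IsFellEquiv [TopologicalSpace H] [TopologicalSpace K] [TopologicalSpace T]
    [TopologicalSpace BB] [TopologicalSpace CC] [TopologicalSpace EE] : Prop where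
  groupoidH : IsTopGroupoid S.𝒢H
  groupoidK : IsTopGroupoid S.𝒢K
  fellB : IsFellBundle.{_, _, v₁} S.𝒢H S.DB
  fellC : IsFellBundle.{_, _, v₂} S.𝒢K S.DC
  equivT : IsGroupoidEquiv S.𝒢H S.𝒢K S.Teq
  bund : IsBanachBundle.{_, _, v₃} S.FE.bund
  -- the left ℬ-action
  proj_lact : ∀ b e, S.𝒢H.src (S.DB.proj b) = S.Teq.ρ (S.q e) →
    S.q (S.FE.lact b e) = S.Teq.lact (S.DB.proj b) (S.q e)
  continuous_lact : Continuous
    (fun p : {p : BB × EE // S.𝒢H.src (S.DB.proj p.1) = S.Teq.ρ (S.q p.2)} =>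
      S.FE.lact p.1.1 p.1.2)
  lact_add : ∀ b e f, S.𝒢H.src (S.DB.proj b) = S.Teq.ρ (S.q e) → S.q e = S.q f →
    S.FE.lact b (S.FE.bund.add e f) = S.FE.bund.add (S.FE.lact b e) (S.FE.lact b f)
  add_lact : ∀ b b' e, S.DB.proj b = S.DB.proj b' →
    S.𝒢H.src (S.DB.proj b) = S.Teq.ρ (S.q e) →
    S.FE.lact (S.DB.add b b') e = S.FE.bund.add (S.FE.lact b e) (S.FE.lact b' e)
  smul_lact : ∀ (z : ℂ) b e, S.𝒢H.src (S.DB.proj b) = S.Teq.ρ (S.q e) →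
    S.FE.lact (S.DB.smul z b) e = S.FE.bund.smul z (S.FE.lact b e)
  lact_smul : ∀ (z : ℂ) b e, S.𝒢H.src (S.DB.proj b) = S.Teq.ρ (S.q e) →
    S.FE.lact b (S.FE.bund.smul z e) = S.FE.bund.smul z (S.FE.lact b e)
  lact_lact : ∀ b b' e, S.𝒢H.src (S.DB.proj b) = S.𝒢H.rng (S.DB.proj b') →
    S.𝒢H.src (S.DB.proj b') = S.Teq.ρ (S.q e) →
    S.FE.lact (S.DB.mul b b') e = S.FE.lact b (S.FE.lact b' e)
  norm_lact_le : ∀ b e, S.𝒢H.src (S.DB.proj b) = S.Teq.ρ (S.q e) →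
    S.FE.bund.norm (S.FE.lact b e) ≤ S.DB.norm b * S.FE.bund.norm e
  -- the right 𝒞-action
  proj_ract : ∀ e c, S.Teq.σ (S.q e) = S.𝒢K.rng (S.DC.proj c) →
    S.q (S.FE.ract e c) = S.Teq.ract (S.q e) (S.DC.proj c)
  continuous_ract : Continuous
    (fun p : {p : EE × CC // S.Teq.σ (S.q p.1) = S.𝒢K.rng (S.DC.proj p.2)} =>
      S.FE.ract p.1.1 p.1.2)
  ract_add : ∀ e f c, S.q e = S.q f → S.Teq.σ (S.q e) = S.𝒢K.rng (S.DC.proj c) →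
    S.FE.ract (S.FE.bund.add e f) c = S.FE.bund.add (S.FE.ract e c) (S.FE.ract f c)
  add_ract : ∀ e c c', S.DC.proj c = S.DC.proj c' →
    S.Teq.σ (S.q e) = S.𝒢K.rng (S.DC.proj c) →
    S.FE.ract e (S.DC.add c c') = S.FE.bund.add (S.FE.ract e c) (S.FE.ract e c')
  smul_ract : ∀ (z : ℂ) e c, S.Teq.σ (S.q e) = S.𝒢K.rng (S.DC.proj c) →
    S.FE.ract (S.FE.bund.smul z e) c = S.FE.bund.smul z (S.FE.ract e c)
  ract_smul : ∀ (z : ℂ) e c, S.Teq.σ (S.q e) = S.𝒢K.rng (S.DC.proj c) →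
    S.FE.ract e (S.DC.smul z c) = S.FE.bund.smul z (S.FE.ract e c)
  ract_ract : ∀ e c c', S.Teq.σ (S.q e) = S.𝒢K.rng (S.DC.proj c) →
    S.𝒢K.src (S.DC.proj c) = S.𝒢K.rng (S.DC.proj c') →
    S.FE.ract e (S.DC.mul c c') = S.FE.ract (S.FE.ract e c) c'
  norm_ract_le : ∀ e c, S.Teq.σ (S.q e) = S.𝒢K.rng (S.DC.proj c) →
    S.FE.bund.norm (S.FE.ract e c) ≤ S.FE.bund.norm e * S.DC.norm c
  -- (E1)
  lact_ract : ∀ b e c, S.𝒢H.src (S.DB.proj b) = S.Teq.ρ (S.q e) →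
    S.Teq.σ (S.q e) = S.𝒢K.rng (S.DC.proj c) →
    S.FE.lact b (S.FE.ract e c) = S.FE.ract (S.FE.lact b e) c
  -- (E2)(a)
  proj_linner : ∀ e f, S.Teq.σ (S.q e) = S.Teq.σ (S.q f) →
    S.DB.proj (S.FE.linner e f) = S.Teq.τH (S.q e) (S.q f)
  proj_rinner : ∀ e f, S.Teq.ρ (S.q e) = S.Teq.ρ (S.q f) →
    S.DC.proj (S.FE.rinner e f) = S.Teq.τK (S.q e) (S.q f)
  continuous_linner : Continuous
    (fun p : {p : EE × EE // S.Teq.σ (S.q p.1) = S.Teq.σ (S.q p.2)} =>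
      S.FE.linner p.1.1 p.1.2)
  continuous_rinner : Continuous
    (fun p : {p : EE × EE // S.Teq.ρ (S.q p.1) = S.Teq.ρ (S.q p.2)} =>
      S.FE.rinner p.1.1 p.1.2)
  -- sesquilinearity
  linner_add_left : ∀ e e' f, S.q e = S.q e' → S.Teq.σ (S.q e) = S.Teq.σ (S.q f) →
    S.FE.linner (S.FE.bund.add e e') f = S.DB.add (S.FE.linner e f) (S.FE.linner e' f)
  linner_add_right : ∀ e f f', S.q f = S.q f' → S.Teq.σ (S.q e) = S.Teq.σ (S.q f) →
    S.FE.linner e (S.FE.bund.add f f') = S.DB.add (S.FE.linner e f) (S.FE.linner e f')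
  linner_smul_left : ∀ (z : ℂ) e f, S.Teq.σ (S.q e) = S.Teq.σ (S.q f) →
    S.FE.linner (S.FE.bund.smul z e) f = S.DB.smul z (S.FE.linner e f)
  linner_smul_right : ∀ (z : ℂ) e f, S.Teq.σ (S.q e) = S.Teq.σ (S.q f) →
    S.FE.linner e (S.FE.bund.smul z f) = S.DB.smul (starRingEnd ℂ z) (S.FE.linner e f)
  rinner_add_left : ∀ e e' f, S.q e = S.q e' → S.Teq.ρ (S.q e) = S.Teq.ρ (S.q f) →
    S.FE.rinner (S.FE.bund.add e e') f = S.DC.add (S.FE.rinner e f) (S.FE.rinner e' f)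
  rinner_add_right : ∀ e f f', S.q f = S.q f' → S.Teq.ρ (S.q e) = S.Teq.ρ (S.q f) →
    S.FE.rinner e (S.FE.bund.add f f') = S.DC.add (S.FE.rinner e f) (S.FE.rinner e f')
  rinner_smul_left : ∀ (z : ℂ) e f, S.Teq.ρ (S.q e) = S.Teq.ρ (S.q f) →
    S.FE.rinner (S.FE.bund.smul z e) f = S.DC.smul (starRingEnd ℂ z) (S.FE.rinner e f)
  rinner_smul_right : ∀ (z : ℂ) e f, S.Teq.ρ (S.q e) = S.Teq.ρ (S.q f) →
    S.FE.rinner e (S.FE.bund.smul z f) = S.DC.smul z (S.FE.rinner e f)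
  -- (E2)(b)
  linner_star : ∀ e f, S.Teq.σ (S.q e) = S.Teq.σ (S.q f) →
    S.DB.star (S.FE.linner e f) = S.FE.linner f e
  rinner_star : ∀ e f, S.Teq.ρ (S.q e) = S.Teq.ρ (S.q f) →
    S.DC.star (S.FE.rinner e f) = S.FE.rinner f e
  -- (E2)(c)
  linner_lact : ∀ b e f, S.𝒢H.src (S.DB.proj b) = S.Teq.ρ (S.q e) →
    S.Teq.σ (S.q e) = S.Teq.σ (S.q f) →
    S.FE.linner (S.FE.lact b e) f = S.DB.mul b (S.FE.linner e f)
  rinner_ract : ∀ e f c, S.Teq.ρ (S.q e) = S.Teq.ρ (S.q f) →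
    S.Teq.σ (S.q f) = S.𝒢K.rng (S.DC.proj c) →
    S.FE.rinner e (S.FE.ract f c) = S.DC.mul (S.FE.rinner e f) c
  -- (E2)(d)
  imprim : ∀ e f g, S.Teq.σ (S.q e) = S.Teq.σ (S.q f) →
    S.Teq.ρ (S.q f) = S.Teq.ρ (S.q g) →
    S.FE.lact (S.FE.linner e f) g = S.FE.ract e (S.FE.rinner f g)
  -- (E3): each fibre `E_t` is a `B_{ρ(t)}`–`C_{σ(t)}` imprimitivity bimodule
  linner_self_pos : ∀ e, ∃ b, S.DB.proj b = S.Teq.ρ (S.q e) ∧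
    S.FE.linner e e = S.DB.mul (S.DB.star b) b
  rinner_self_pos : ∀ e, ∃ c, S.DC.proj c = S.Teq.σ (S.q e) ∧
    S.FE.rinner e e = S.DC.mul (S.DC.star c) c
  norm_linner_self : ∀ e, S.DB.norm (S.FE.linner e e) = S.FE.bund.norm e ^ 2
  norm_rinner_self : ∀ e, S.DC.norm (S.FE.rinner e e) = S.FE.bund.norm e ^ 2
  linner_full : ∀ t : T, ∀ b, S.DB.proj b = S.Teq.ρ t →
    b ∈ fibSpanApprox S.DB.toBanachBundleData (S.Teq.ρ t)
      (fun w => ∃ e f, S.q e = t ∧ S.q f = t ∧ w = S.FE.linner e f)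
  rinner_full : ∀ t : T, ∀ c, S.DC.proj c = S.Teq.σ t →
    c ∈ fibSpanApprox S.DC.toBanachBundleData (S.Teq.σ t)
      (fun w => ∃ e f, S.q e = t ∧ S.q f = t ∧ w = S.FE.rinner e f)

/-! #### Submodules, products and the associated ideals -/

/-- `ℰ·𝒥`: the set of actual products `e·c` with `c ∈ 𝒥` (over all composable pairs). -/
def eDotJ (J : Set CC) : Set EE :=
  {z : EE | ∃ e c, c ∈ J ∧ S.Teq.σ (S.q e) = S.𝒢K.rng (S.DC.proj c) ∧ z = S.FE.ract e c}

/-- `𝒦·ℰ`: the set of actual products `b·e` with `b ∈ 𝒦`. -/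
def kDotE (Kk : Set BB) : Set EE :=
  {z : EE | ∃ b e, b ∈ Kk ∧ S.𝒢H.src (S.DB.proj b) = S.Teq.ρ (S.q e) ∧ z = S.FE.lact b e}

/-- A Banach `ℬ`–`𝒞` submodule of `ℰ`: a Banach subbundle stable under the two
actions. -/
structure IsBCSubmodule [TopologicalSpace T] [TopologicalSpace EE] (M : Set EE) :
    Prop where
  subbundle : IsSubbundle S.FE.bund M
  lact_mem : ∀ b e, S.𝒢H.src (S.DB.proj b) = S.Teq.ρ (S.q e) → e ∈ M → S.FE.lact b e ∈ M
  ract_mem : ∀ e c, S.Teq.σ (S.q e) = S.𝒢K.rng (S.DC.proj c) → e ∈ M →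
    S.FE.ract e c ∈ M

/-- A full Banach `ℬ`–`𝒞` submodule of `ℰ`: moreover `closure span B_h·M_t = M_{h·t}`
and `closure span M_t·C_k = M_{t·k}`. -/
structure IsFullBCSubmodule [TopologicalSpace T] [TopologicalSpace EE] (M : Set EE) :
    Prop where
  bcSubmodule : IsBCSubmodule S M
  lfull : ∀ (h : H) (t : T), S.𝒢H.src h = S.Teq.ρ t →
    M ∩ {e | S.q e = S.Teq.lact h t}
      = fibSpanApprox S.FE.bund (S.Teq.lact h t)
          (fun w => ∃ b m, S.DB.proj b = h ∧ m ∈ M ∧ S.q m = t ∧ w = S.FE.lact b m)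
  rfull : ∀ (t : T) (k : K), S.Teq.σ t = S.𝒢K.rng k →
    M ∩ {e | S.q e = S.Teq.ract t k}
      = fibSpanApprox S.FE.bund (S.Teq.ract t k)
          (fun w => ∃ m c, m ∈ M ∧ S.q m = t ∧ S.DC.proj c = k ∧ w = S.FE.ract m c)

/-- The ideal `R_t = closure span ⟨E_t, M_t⟩_𝒞` of `C_{σ(t)}` attached to a submodule
`ℳ` and `t ∈ T`. -/
def rIdeal (M : Set EE) (t : T) : Set CC :=
  fibSpanApprox S.DC.toBanachBundleData (S.Teq.σ t)
    (fun w => ∃ e m, S.q e = t ∧ m ∈ M ∧ S.q m = t ∧ w = S.FE.rinner e m)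

/-- The ideal `L_t = closure span ⟨M_t, E_t⟩_ℬ` of `B_{ρ(t)}` attached to a submodule
`ℳ` and `t ∈ T`. -/
def lIdeal (M : Set EE) (t : T) : Set BB :=
  fibSpanApprox S.DB.toBanachBundleData (S.Teq.ρ t)
    (fun w => ∃ m e, m ∈ M ∧ S.q m = t ∧ S.q e = t ∧ w = S.FE.linner m e)

/-- `𝒥_ℳ = ∐_{k ∈ K} R_{r(k)}·C_k`, the subset of `𝒞` attached to a submodule `ℳ`
(the fibre over `k` consisting of actual products `a·c`, `a ∈ R_{r(k)}`, `c ∈ C_k`). -/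
def jOfM (M : Set EE) : Set CC :=
  {z : CC | ∃ (t : T) (a c : CC), S.Teq.σ t = S.𝒢K.rng (S.DC.proj c) ∧
    a ∈ S.rIdeal M t ∧ z = S.DC.mul a c}

/-- `𝒦_ℳ = ∐_{h ∈ H} L_{r(h)}·B_h`, the subset of `ℬ` attached to a submodule `ℳ`. -/
def kOfM (M : Set EE) : Set BB :=
  {z : BB | ∃ (t : T) (a b : BB), S.Teq.ρ t = S.𝒢H.rng (S.DB.proj b) ∧
    a ∈ S.lIdeal M t ∧ z = S.DB.mul a b}

end EquivSetup

end FellRieffel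

namespace FellRieffel

open EquivSetup
/-! ### Auxiliary lemmas for the proof -/

section BundleArith

variable {X B : Type*} [TopologicalSpace X] [TopologicalSpace B]
  {D : BanachBundleData X B} (hD : IsBanachBundle D)

set_option linter.unusedSectionVars false


omit [TopologicalSpace X] [TopologicalSpace B] in
lemma BanachBundleData.sub_def (a b : B) : D.sub a b = D.add a (D.smul (-1) b) := rfl

include hD

lemma bb_proj_neg (b : B) : D.proj (D.smul (-1) b) = D.proj b := hD.proj_smul _ _

lemma bb_proj_sub {a b : B} (h : D.proj a = D.proj b) :
    D.proj (D.sub a b) = D.proj a :=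
  hD.proj_add a _ (by rw [bb_proj_neg hD, h])

lemma bb_smul_zero_coef (b : B) : D.smul 0 b = D.zero (D.proj b) := by
  set z := D.smul 0 b with hz
  have hzz : z = D.add z z := by
    rw [hz, ← hD.add_smul]; norm_num
  have hproj : D.proj (D.smul (-1) z) = D.proj z := bb_proj_neg hD z
  have : z = D.zero (D.proj z) := by
    calc z = D.add (D.zero (D.proj z)) z := (hD.zero_add z).symm
    _ = D.add (D.add (D.smul (-1) z) z) z := by rw [hD.neg_add_cancel]
    _ = D.add (D.smul (-1) z) (D.add z z) := hD.add_assoc _ _ _ hproj rfl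
    _ = D.add (D.smul (-1) z) z := by rw [← hzz]
    _ = D.zero (D.proj z) := hD.neg_add_cancel z
  rw [this, hz, hD.proj_smul]

lemma bb_smul_zero_sec (c : ℂ) (x : X) : D.smul c (D.zero x) = D.zero x := by
  have h0 : D.norm (D.smul c (D.zero x)) = 0 := by
    rw [hD.norm_smul, hD.norm_zero, mul_zero]
  have := hD.eq_zero_of_norm_eq_zero _ h0
  rwa [hD.proj_smul, hD.proj_zero] at this

lemma bb_add_zero (b : B) : D.add b (D.zero (D.proj b)) = b := by
  rw [hD.add_comm b _ (by rw [hD.proj_zero]), hD.zero_add]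

lemma bb_sub_zero (b : B) : D.sub b (D.zero (D.proj b)) = b := by
  rw [BanachBundleData.sub_def, bb_smul_zero_sec hD, bb_add_zero hD]

lemma bb_sub_self (b : B) : D.sub b b = D.zero (D.proj b) := by
  rw [BanachBundleData.sub_def, hD.add_comm b _ (bb_proj_neg hD b).symm,
    hD.neg_add_cancel]

lemma bb_add_sub_cancel {a s : B} (h : D.proj a = D.proj s) :
    D.add (D.sub a s) s = a := by
  rw [BanachBundleData.sub_def,
    hD.add_assoc a _ s (by rw [bb_proj_neg hD, h]) (bb_proj_neg hD s),
    hD.neg_add_cancel, ← h, bb_add_zero hD]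

lemma bb_sub_add_sub {a b c : B} (hab : D.proj a = D.proj b) (hbc : D.proj b = D.proj c) :
    D.add (D.sub a b) (D.sub b c) = D.sub a c := by
  have p1 : D.proj (D.smul (-1) b) = D.proj b := bb_proj_neg hD b
  have p2 : D.proj (D.smul (-1) c) = D.proj c := bb_proj_neg hD c
  have p3 : D.proj (D.add b (D.smul (-1) c)) = D.proj b := hD.proj_add _ _ (by rw [p2, hbc])
  have p4 : D.proj b = D.proj (D.smul (-1) c) := by rw [p2, hbc]
  rw [BanachBundleData.sub_def a b, BanachBundleData.sub_def b c,
    hD.add_assoc a _ _ (by rw [p1, hab]) (by rw [p1, p3]),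
    ← hD.add_assoc (D.smul (-1) b) b (D.smul (-1) c) (by rw [p1]) p4,
    hD.neg_add_cancel, p4, hD.zero_add, BanachBundleData.sub_def]

lemma bb_norm_sub_triangle {a b c : B} (hab : D.proj a = D.proj b)
    (hbc : D.proj b = D.proj c) :
    D.norm (D.sub a c) ≤ D.norm (D.sub a b) + D.norm (D.sub b c) := by
  rw [← bb_sub_add_sub hD hab hbc]
  exact hD.norm_add_le _ _ (by rw [bb_proj_sub hD hab, bb_proj_sub hD hbc, hab])

lemma bb_eq_of_sub_eq_zero {a b : B} (h : D.proj a = D.proj b)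
    (h0 : D.sub a b = D.zero (D.proj a)) : a = b := by
  have := bb_add_sub_cancel hD h
  rw [h0, h, hD.zero_add] at this
  exact this.symm

lemma bb_eq_of_norm_sub_eq_zero {a b : B} (h : D.proj a = D.proj b)
    (h0 : D.norm (D.sub a b) = 0) : a = b := by
  refine bb_eq_of_sub_eq_zero hD h ?_
  have := hD.eq_zero_of_norm_eq_zero _ h0
  rwa [bb_proj_sub hD h] at this

lemma bb_proj_fibSum (x : X) (l : List B) (h : ∀ b ∈ l, D.proj b = x) :
    D.proj (D.fibSum x l) = x := by
  induction l with
  | nil => exact hD.proj_zero x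
  | cons b l ih =>
    have hb := h b (List.mem_cons_self)
    have hl := ih (fun c hc => h c (List.mem_cons_of_mem b hc))
    show D.proj (D.add b (D.fibSum x l)) = x
    rw [hD.proj_add b _ (by rw [hb, hl]), hb]

lemma bb_fibSum_append (x : X) (l₁ l₂ : List B) (h₁ : ∀ b ∈ l₁, D.proj b = x)
    (h₂ : ∀ b ∈ l₂, D.proj b = x) :
    D.fibSum x (l₁ ++ l₂) = D.add (D.fibSum x l₁) (D.fibSum x l₂) := by
  induction l₁ with
  | nil =>
    show D.fibSum x l₂ = D.add (D.zero x) (D.fibSum x l₂)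
    have := hD.zero_add (D.fibSum x l₂)
    rw [bb_proj_fibSum hD x l₂ h₂] at this
    exact this.symm
  | cons b l ih =>
    have hb := h₁ b (List.mem_cons_self)
    have hl : ∀ c ∈ l, D.proj c = x := fun c hc => h₁ c (List.mem_cons_of_mem b hc)
    show D.add b (D.fibSum x (l ++ l₂)) = D.add (D.add b (D.fibSum x l)) (D.fibSum x l₂)
    rw [ih hl, ← hD.add_assoc b _ _ (by rw [hb, bb_proj_fibSum hD x l hl])
      (by rw [bb_proj_fibSum hD x l hl, bb_proj_fibSum hD x l₂ h₂])]

lemma bb_add_add_add_comm {x : X} {a b c d : B} (ha : D.proj a = x) (hb : D.proj b = x)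
    (hc : D.proj c = x) (hd : D.proj d = x) :
    D.add (D.add a b) (D.add c d) = D.add (D.add a c) (D.add b d) := by
  have pbc : D.proj (D.add c d) = x := by rw [hD.proj_add c d (hc.trans hd.symm), hc]
  calc D.add (D.add a b) (D.add c d)
      = D.add a (D.add b (D.add c d)) :=
        hD.add_assoc a b _ (ha.trans hb.symm) (by rw [hb, pbc])
    _ = D.add a (D.add (D.add b c) d) := by
        rw [← hD.add_assoc b c d (hb.trans hc.symm) (hc.trans hd.symm)]
    _ = D.add a (D.add (D.add c b) d) := by rw [hD.add_comm b c (hb.trans hc.symm)]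
    _ = D.add a (D.add c (D.add b d)) := by
        rw [hD.add_assoc c b d (hc.trans hb.symm) (hb.trans hd.symm)]
    _ = D.add (D.add a c) (D.add b d) := by
        rw [← hD.add_assoc a c _ (ha.trans hc.symm)
          (by rw [hc, hD.proj_add b d (hb.trans hd.symm), hb])]

lemma bb_sub_add_add {x : X} {a b c d : B} (ha : D.proj a = x) (hb : D.proj b = x)
    (hc : D.proj c = x) (hd : D.proj d = x) :
    D.sub (D.add a b) (D.add c d) = D.add (D.sub a c) (D.sub b d) := by
  rw [BanachBundleData.sub_def, hD.smul_add _ c d (hc.trans hd.symm),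
    bb_add_add_add_comm hD ha hb (by rw [bb_proj_neg hD, hc]) (by rw [bb_proj_neg hD, hd])]
  rfl

end BundleArith
section SpanApprox

variable {X B : Type*} [TopologicalSpace X] [TopologicalSpace B]
  {D : BanachBundleData X B} (hD : IsBanachBundle D)

set_option linter.unusedSectionVars false

omit [TopologicalSpace X] [TopologicalSpace B] in
lemma bb_fibSum_nil (x : X) : D.fibSum x ([] : List B) = D.zero x := rfl

omit [TopologicalSpace X] [TopologicalSpace B] in
lemma bb_fibSum_cons (x : X) (b : B) (l : List B) :
    D.fibSum x (b :: l) = D.add b (D.fibSum x l) := rfl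

include hD

lemma bb_approx_list (x : X) (P' : B → Prop) (hP' : ∀ b, P' b → D.proj b = x) :
    ∀ l : List B, (∀ b ∈ l, b ∈ fibSpanApprox D x P') → ∀ δ > 0,
      ∃ L : List B, (∀ b ∈ L, P' b) ∧
        D.norm (D.sub (D.fibSum x l) (D.fibSum x L)) < δ := by
  intro l
  induction l with
  | nil =>
    intro _ δ hδ
    refine ⟨[], by simp, ?_⟩
    rw [bb_fibSum_nil, bb_sub_self hD, hD.norm_zero]
    exact hδ
  | cons b l ih =>
    intro h δ hδ
    have hb := h b (List.mem_cons_self)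
    have hl : ∀ c ∈ l, c ∈ fibSpanApprox D x P' :=
      fun c hc => h c (List.mem_cons_of_mem b hc)
    obtain ⟨Lb, hLb, hLbn⟩ := hb.2 (δ/2) (by linarith)
    obtain ⟨Ll, hLl, hLln⟩ := ih hl (δ/2) (by linarith)
    have pLb : ∀ c ∈ Lb, D.proj c = x := fun c hc => hP' c (hLb c hc)
    have pLl : ∀ c ∈ Ll, D.proj c = x := fun c hc => hP' c (hLl c hc)
    have pl : ∀ c ∈ l, D.proj c = x := fun c hc => (hl c hc).1
    refine ⟨Lb ++ Ll, ?_, ?_⟩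
    · intro c hc
      rcases List.mem_append.1 hc with h' | h'
      · exact hLb c h'
      · exact hLl c h'
    · rw [bb_fibSum_cons, bb_fibSum_append hD x Lb Ll pLb pLl,
        bb_sub_add_add hD hb.1 (bb_proj_fibSum hD x l pl)
          (bb_proj_fibSum hD x Lb pLb) (bb_proj_fibSum hD x Ll pLl)]
      have hn := hD.norm_add_le (D.sub b (D.fibSum x Lb))
        (D.sub (D.fibSum x l) (D.fibSum x Ll))
        (by rw [bb_proj_sub hD (by rw [hb.1, bb_proj_fibSum hD x Lb pLb]),
          bb_proj_sub hD (by rw [bb_proj_fibSum hD x l pl, bb_proj_fibSum hD x Ll pLl]),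
          hb.1, bb_proj_fibSum hD x l pl])
      calc D.norm _ ≤ _ := hn
      _ < δ/2 + δ/2 := by
          apply add_lt_add hLbn hLln
      _ = δ := by ring

lemma bb_spanApprox_trans (x : X) {P P' : B → Prop} (hP' : ∀ b, P' b → D.proj b = x)
    (h : ∀ b, P b → b ∈ fibSpanApprox D x P') :
    fibSpanApprox D x P ⊆ fibSpanApprox D x P' := by
  intro c hc
  obtain ⟨hcx, happ⟩ := hc
  refine ⟨hcx, fun ε hε => ?_⟩
  obtain ⟨l, hl, hnorm⟩ := happ (ε/2) (by linarith)
  obtain ⟨L, hL, hLnorm⟩ :=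
    bb_approx_list hD x P' hP' l (fun b hb => h b (hl b hb)) (ε/2) (by linarith)
  have pl : ∀ b ∈ l, D.proj b = x := fun b hb => (h b (hl b hb)).1
  have pL : ∀ b ∈ L, D.proj b = x := fun b hb => hP' b (hL b hb)
  refine ⟨L, hL, ?_⟩
  calc D.norm (D.sub c (D.fibSum x L))
      ≤ D.norm (D.sub c (D.fibSum x l)) + D.norm (D.sub (D.fibSum x l) (D.fibSum x L)) :=
        bb_norm_sub_triangle hD (by rw [hcx, bb_proj_fibSum hD x l pl])
          (by rw [bb_proj_fibSum hD x l pl, bb_proj_fibSum hD x L pL])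
    _ < ε/2 + ε/2 := add_lt_add hnorm hLnorm
    _ = ε := by ring

end SpanApprox

section GroupoidUnits

variable {G : Type*} {𝒢 : GroupoidStr G} {u : G} (hu : 𝒢.src u = u)

include hu

lemma gpd_unit_rng : 𝒢.rng u = u := by
  conv_lhs => rw [← hu]
  rw [𝒢.rng_src, hu]

lemma gpd_unit_inv : 𝒢.inv u = u := by
  have h1 : 𝒢.mul (𝒢.inv u) u = 𝒢.src u := 𝒢.inv_mul u
  have h2 : 𝒢.inv u = 𝒢.mul (𝒢.inv u) (𝒢.src (𝒢.inv u)) := (𝒢.mul_id _).symm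
  rw [𝒢.src_inv, gpd_unit_rng hu] at h2
  rw [h2, h1, hu]

lemma gpd_unit_mul : 𝒢.mul u u = u := by
  have := 𝒢.id_mul u
  rwa [gpd_unit_rng hu] at this

end GroupoidUnits

section FellDerived

variable {G B' : Type*} [TopologicalSpace G] [TopologicalSpace B']
  {𝒢 : GroupoidStr G} {F : FellBundleData G B'} (hF : IsFellBundle 𝒢 F)

set_option linter.unusedSectionVars false

include hF

lemma fb_zero_mul (x : G) (d : B') (h : 𝒢.src x = 𝒢.rng (F.proj d)) :
    F.mul (F.zero x) d = F.zero (𝒢.mul x (F.proj d)) := by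
  have hB := hF.toIsBanachBundle
  have hc : 𝒢.src (F.proj (F.zero x)) = 𝒢.rng (F.proj d) := by rw [hB.proj_zero]; exact h
  calc F.mul (F.zero x) d = F.mul (F.smul 0 (F.zero x)) d := by rw [bb_smul_zero_sec hB]
    _ = F.smul 0 (F.mul (F.zero x) d) := hF.smul_mul 0 (F.zero x) d hc
    _ = F.zero (F.proj (F.mul (F.zero x) d)) := bb_smul_zero_coef hB _
    _ = F.zero (𝒢.mul x (F.proj d)) := by rw [hF.proj_mul _ _ hc, hB.proj_zero]

lemma fb_mul_zero (d : B') (x : G) (h : 𝒢.src (F.proj d) = 𝒢.rng x) :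
    F.mul d (F.zero x) = F.zero (𝒢.mul (F.proj d) x) := by
  have hB := hF.toIsBanachBundle
  have hc : 𝒢.src (F.proj d) = 𝒢.rng (F.proj (F.zero x)) := by rw [hB.proj_zero]; exact h
  calc F.mul d (F.zero x) = F.mul d (F.smul 0 (F.zero x)) := by rw [bb_smul_zero_sec hB]
    _ = F.smul 0 (F.mul d (F.zero x)) := hF.mul_smul' 0 d (F.zero x) hc
    _ = F.zero (F.proj (F.mul d (F.zero x))) := bb_smul_zero_coef hB _
    _ = F.zero (𝒢.mul (F.proj d) x) := by rw [hF.proj_mul _ _ hc, hB.proj_zero]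

lemma fb_star_zero (x : G) : F.star (F.zero x) = F.zero (𝒢.inv x) := by
  have hB := hF.toIsBanachBundle
  calc F.star (F.zero x) = F.star (F.smul 0 (F.zero x)) := by rw [bb_smul_zero_sec hB]
    _ = F.smul (starRingEnd ℂ 0) (F.star (F.zero x)) := hF.star_smul 0 _
    _ = F.smul 0 (F.star (F.zero x)) := by rw [map_zero]
    _ = F.zero (F.proj (F.star (F.zero x))) := bb_smul_zero_coef hB _
    _ = F.zero (𝒢.inv x) := by rw [hF.proj_star, hB.proj_zero]

lemma fb_mul_sub_right (z a b : B') (hab : F.proj a = F.proj b)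
    (hcomp : 𝒢.src (F.proj z) = 𝒢.rng (F.proj a)) :
    F.mul z (F.sub a b) = F.sub (F.mul z a) (F.mul z b) := by
  have hB := hF.toIsBanachBundle
  rw [BanachBundleData.sub_def,
    hF.mul_add z a (F.smul (-1) b) hcomp (by rw [bb_proj_neg hB, hab]),
    hF.mul_smul' (-1) z b (by rw [← hab]; exact hcomp), ← BanachBundleData.sub_def]

lemma fb_sub_mul_left (a b z : B') (hab : F.proj a = F.proj b)
    (hcomp : 𝒢.src (F.proj a) = 𝒢.rng (F.proj z)) :
    F.mul (F.sub a b) z = F.sub (F.mul a z) (F.mul b z) := by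
  have hB := hF.toIsBanachBundle
  rw [BanachBundleData.sub_def,
    hF.add_mul a (F.smul (-1) b) z (by rw [bb_proj_neg hB, hab]) hcomp,
    hF.smul_mul (-1) b z (by rw [← hab]; exact hcomp), ← BanachBundleData.sub_def]

lemma fb_fibSum_mul (x : G) (d : B') (l : List B')
    (hcomp : 𝒢.src x = 𝒢.rng (F.proj d))
    (hl : ∀ w ∈ l, F.proj w = x ∧ F.mul w d = F.zero (𝒢.mul x (F.proj d))) :
    F.mul (F.fibSum x l) d = F.zero (𝒢.mul x (F.proj d)) := by
  have hB := hF.toIsBanachBundle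
  induction l with
  | nil => exact fb_zero_mul hF x d hcomp
  | cons w l ih =>
    obtain ⟨hw, hwd⟩ := hl w (List.mem_cons_self)
    have hl' := fun z hz => hl z (List.mem_cons_of_mem w hz)
    have psum : F.proj (F.fibSum x l) = x :=
      bb_proj_fibSum hB x l (fun z hz => (hl' z hz).1)
    rw [bb_fibSum_cons,
      hF.add_mul w _ d (by rw [hw, psum]) (by rw [hw]; exact hcomp), hwd, ih hl']
    have := hB.zero_add (F.zero (𝒢.mul x (F.proj d)))
    rwa [hB.proj_zero] at this

lemma fb_mul_fibSum (d : B') (x : G) (l : List B')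
    (hcomp : 𝒢.src (F.proj d) = 𝒢.rng x)
    (hl : ∀ w ∈ l, F.proj w = x ∧ F.mul d w = F.zero (𝒢.mul (F.proj d) x)) :
    F.mul d (F.fibSum x l) = F.zero (𝒢.mul (F.proj d) x) := by
  have hB := hF.toIsBanachBundle
  induction l with
  | nil => exact fb_mul_zero hF d x hcomp
  | cons w l ih =>
    obtain ⟨hw, hwd⟩ := hl w (List.mem_cons_self)
    have hl' := fun z hz => hl z (List.mem_cons_of_mem w hz)
    have psum : F.proj (F.fibSum x l) = x :=
      bb_proj_fibSum hB x l (fun z hz => (hl' z hz).1)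
    rw [bb_fibSum_cons,
      hF.mul_add d w _ (by rw [hw]; exact hcomp) (by rw [hw, psum]), hwd, ih hl']
    have := hB.zero_add (F.zero (𝒢.mul (F.proj d) x))
    rwa [hB.proj_zero] at this

end FellDerived
section EquivLemmas

variable {H K T BB CC EE : Type*} [TopologicalSpace H] [TopologicalSpace K]
  [TopologicalSpace T] [TopologicalSpace BB] [TopologicalSpace CC] [TopologicalSpace EE]
  {S : EquivSetup H K T BB CC EE} (hS : S.IsFellEquiv)

set_option linter.unusedSectionVars false

include hS

lemma es_q_zero (t : T) : S.q (S.FE.bund.zero t) = t := hS.bund.proj_zero t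

lemma es_tauK_self (t : T) : S.Teq.τK t t = S.Teq.σ t :=
  hS.equivT.free_r t _ (hS.equivT.τK_rng t t rfl).symm (hS.equivT.τK_spec t t rfl)

lemma es_tauH_self (t : T) : S.Teq.τH t t = S.Teq.ρ t :=
  hS.equivT.free_l _ t (hS.equivT.τH_src t t rfl) (hS.equivT.τH_spec t t rfl)

lemma es_rinner_proj {e f : EE} {t : T} (he : S.q e = t) (hf : S.q f = t) :
    S.DC.proj (S.FE.rinner e f) = S.Teq.σ t := by
  rw [hS.proj_rinner e f (by rw [he, hf]), he, hf, es_tauK_self hS]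

lemma es_linner_proj {e f : EE} {t : T} (he : S.q e = t) (hf : S.q f = t) :
    S.DB.proj (S.FE.linner e f) = S.Teq.ρ t := by
  rw [hS.proj_linner e f (by rw [he, hf]), he, hf, es_tauH_self hS]

lemma es_rinner_zero_right {e : EE} {t : T} (he : S.q e = t) :
    S.FE.rinner e (S.FE.bund.zero t) = S.DC.zero (S.Teq.σ t) := by
  have hq0 : S.q (S.FE.bund.zero t) = t := es_q_zero hS t
  have hρ : S.Teq.ρ (S.q e) = S.Teq.ρ (S.q (S.FE.bund.zero t)) := by rw [he, hq0]
  have h2 := hS.rinner_smul_right 0 e (S.FE.bund.zero t) hρ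
  rw [bb_smul_zero_sec hS.bund 0 t] at h2
  rw [h2, bb_smul_zero_coef hS.fellC.toIsBanachBundle,
    es_rinner_proj hS he hq0]

lemma es_linner_zero_left {e : EE} {t : T} (he : S.q e = t) :
    S.FE.linner (S.FE.bund.zero t) e = S.DB.zero (S.Teq.ρ t) := by
  have hq0 : S.q (S.FE.bund.zero t) = t := es_q_zero hS t
  have hσ : S.Teq.σ (S.q (S.FE.bund.zero t)) = S.Teq.σ (S.q e) := by rw [he, hq0]
  have h2 := hS.linner_smul_left 0 (S.FE.bund.zero t) e hσ
  rw [bb_smul_zero_sec hS.bund 0 t] at h2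
  rw [h2, bb_smul_zero_coef hS.fellB.toIsBanachBundle,
    es_linner_proj hS hq0 he]

lemma es_rinner_sub_right {e a b : EE} {t : T} (he : S.q e = t) (ha : S.q a = t)
    (hb : S.q b = t) :
    S.FE.rinner e (S.FE.bund.sub a b) = S.DC.sub (S.FE.rinner e a) (S.FE.rinner e b) := by
  have hnb : S.q (S.FE.bund.smul (-1) b) = t := by
    have := bb_proj_neg hS.bund b
    rw [← hb]; exact this
  have h1 := hS.rinner_add_right e a (S.FE.bund.smul (-1) b)
    (by rw [ha, hnb]) (by rw [he, ha])
  have h2 := hS.rinner_smul_right (-1) e b (by rw [he, hb])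
  rw [BanachBundleData.sub_def, h1, h2, ← BanachBundleData.sub_def]

lemma es_linner_sub_left {a b e : EE} {t : T} (he : S.q e = t) (ha : S.q a = t)
    (hb : S.q b = t) :
    S.FE.linner (S.FE.bund.sub a b) e = S.DB.sub (S.FE.linner a e) (S.FE.linner b e) := by
  have hnb : S.q (S.FE.bund.smul (-1) b) = t := by
    have := bb_proj_neg hS.bund b
    rw [← hb]; exact this
  have h1 := hS.linner_add_left a (S.FE.bund.smul (-1) b) e
    (by rw [ha, hnb]) (by rw [he, ha])
  have h2 := hS.linner_smul_left (-1) b e (by rw [he, hb])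
  rw [BanachBundleData.sub_def, h1, h2, ← BanachBundleData.sub_def]

lemma es_rinner_fibSum_right {e : EE} {t : T} (he : S.q e = t) (l : List EE)
    (hl : ∀ m ∈ l, S.q m = t) :
    S.FE.rinner e (S.FE.bund.fibSum t l)
      = S.DC.fibSum (S.Teq.σ t) (l.map (fun m => S.FE.rinner e m)) := by
  induction l with
  | nil => exact es_rinner_zero_right hS he
  | cons m l ih =>
    have hm := hl m (List.mem_cons_self)
    have hl' : ∀ z ∈ l, S.q z = t := fun z hz => hl z (List.mem_cons_of_mem m hz)
    have hsum : S.q (S.FE.bund.fibSum t l) = t := bb_proj_fibSum hS.bund t l hl'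
    rw [bb_fibSum_cons, hS.rinner_add_right e m (S.FE.bund.fibSum t l)
      (by rw [hm, hsum]) (by rw [he, hm]), ih hl', List.map_cons, bb_fibSum_cons]

lemma es_linner_fibSum_left {e : EE} {t : T} (he : S.q e = t) (l : List EE)
    (hl : ∀ m ∈ l, S.q m = t) :
    S.FE.linner (S.FE.bund.fibSum t l) e
      = S.DB.fibSum (S.Teq.ρ t) (l.map (fun m => S.FE.linner m e)) := by
  induction l with
  | nil => exact es_linner_zero_left hS he
  | cons m l ih =>
    have hm := hl m (List.mem_cons_self)
    have hl' : ∀ z ∈ l, S.q z = t := fun z hz => hl z (List.mem_cons_of_mem m hz)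
    have hsum : S.q (S.FE.bund.fibSum t l) = t := bb_proj_fibSum hS.bund t l hl'
    rw [bb_fibSum_cons, hS.linner_add_left m (S.FE.bund.fibSum t l) e
      (by rw [hm, hsum]) (by rw [he, hm]), ih hl', List.map_cons, bb_fibSum_cons]

lemma es_rinner_small (e : EE) (t : T) (he : S.q e = t) (d : ℕ → EE)
    (hd : ∀ n, S.q (d n) = t)
    (hn : Tendsto (fun n => S.FE.bund.norm (d n)) atTop (𝓝 0)) :
    ∀ ε > 0, ∃ n, S.DC.norm (S.FE.rinner e (d n)) < ε := by
  have hqt : Tendsto (fun n => S.FE.bund.proj (d n)) atTop (𝓝 t) := by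
    have hfun : (fun n => S.FE.bund.proj (d n)) = fun _ => t := funext fun n => hd n
    rw [hfun]; exact tendsto_const_nhds
  have hz : Tendsto d atTop (𝓝 (S.FE.bund.zero t)) := by
    have h' := hS.bund.tendsto_zero (Filter.map ULift.up atTop)
      (fun i : ULift ℕ => d i.down) t
      (by rw [Filter.tendsto_map'_iff]; exact hqt)
      (by rw [Filter.tendsto_map'_iff]; exact hn)
    rw [Filter.tendsto_map'_iff] at h'
    exact h'
  have hcond : ∀ n, S.Teq.ρ (S.q e) = S.Teq.ρ (S.q (d n)) := fun n => by rw [he, hd n]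
  have hlim : S.Teq.ρ (S.q e) = S.Teq.ρ (S.q (S.FE.bund.zero t)) := by
    rw [he, es_q_zero hS t]
  have hFt : Tendsto (fun n => (⟨(e, d n), hcond n⟩ :
      {p : EE × EE // S.Teq.ρ (S.q p.1) = S.Teq.ρ (S.q p.2)})) atTop
      (𝓝 ⟨(e, S.FE.bund.zero t), hlim⟩) := by
    rw [tendsto_subtype_rng]
    exact tendsto_const_nhds.prodMk_nhds hz
  have hcont := (hS.continuous_rinner.tendsto ⟨(e, S.FE.bund.zero t), hlim⟩).comp hFt
  simp only [Function.comp_def] at hcont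
  rw [es_rinner_zero_right hS he] at hcont
  intro ε hε
  have hopen : IsOpen {c : CC | S.DC.norm c < ε} := hS.fellC.usc_norm ε
  have hmem : S.DC.zero (S.Teq.σ t) ∈ {c : CC | S.DC.norm c < ε} := by
    simp only [Set.mem_setOf_eq]
    rw [hS.fellC.norm_zero]; exact hε
  have hev := hcont.eventually_mem (hopen.mem_nhds hmem)
  obtain ⟨n, hn'⟩ := hev.exists
  exact ⟨n, hn'⟩

lemma es_linner_small (e : EE) (t : T) (he : S.q e = t) (d : ℕ → EE)
    (hd : ∀ n, S.q (d n) = t)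
    (hn : Tendsto (fun n => S.FE.bund.norm (d n)) atTop (𝓝 0)) :
    ∀ ε > 0, ∃ n, S.DB.norm (S.FE.linner (d n) e) < ε := by
  have hqt : Tendsto (fun n => S.FE.bund.proj (d n)) atTop (𝓝 t) := by
    have hfun : (fun n => S.FE.bund.proj (d n)) = fun _ => t := funext fun n => hd n
    rw [hfun]; exact tendsto_const_nhds
  have hz : Tendsto d atTop (𝓝 (S.FE.bund.zero t)) := by
    have h' := hS.bund.tendsto_zero (Filter.map ULift.up atTop)
      (fun i : ULift ℕ => d i.down) t
      (by rw [Filter.tendsto_map'_iff]; exact hqt)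
      (by rw [Filter.tendsto_map'_iff]; exact hn)
    rw [Filter.tendsto_map'_iff] at h'
    exact h'
  have hcond : ∀ n, S.Teq.σ (S.q (d n)) = S.Teq.σ (S.q e) := fun n => by rw [he, hd n]
  have hlim : S.Teq.σ (S.q (S.FE.bund.zero t)) = S.Teq.σ (S.q e) := by
    rw [he, es_q_zero hS t]
  have hFt : Tendsto (fun n => (⟨(d n, e), hcond n⟩ :
      {p : EE × EE // S.Teq.σ (S.q p.1) = S.Teq.σ (S.q p.2)})) atTop
      (𝓝 ⟨(S.FE.bund.zero t, e), hlim⟩) := by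
    rw [tendsto_subtype_rng]
    exact hz.prodMk_nhds tendsto_const_nhds
  have hcont := (hS.continuous_linner.tendsto ⟨(S.FE.bund.zero t, e), hlim⟩).comp hFt
  simp only [Function.comp_def] at hcont
  rw [es_linner_zero_left hS he] at hcont
  intro ε hε
  have hopen : IsOpen {c : BB | S.DB.norm c < ε} := hS.fellB.usc_norm ε
  have hmem : S.DB.zero (S.Teq.ρ t) ∈ {c : BB | S.DB.norm c < ε} := by
    simp only [Set.mem_setOf_eq]
    rw [hS.fellB.norm_zero]; exact hε
  have hev := hcont.eventually_mem (hopen.mem_nhds hmem)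
  obtain ⟨n, hn'⟩ := hev.exists
  exact ⟨n, hn'⟩

end EquivLemmas
section Separation

variable {H K T BB CC EE : Type*} [TopologicalSpace H] [TopologicalSpace K]
  [TopologicalSpace T] [TopologicalSpace BB] [TopologicalSpace CC] [TopologicalSpace EE]
  {S : EquivSetup H K T BB CC EE} (hS : S.IsFellEquiv)

set_option linter.unusedSectionVars false

include hS

lemma es_sep_right (t₀ : T) (d : CC) (hd : S.DC.proj d = S.Teq.σ t₀)
    (h : ∀ x y, S.q x = t₀ → S.q y = t₀ →
      S.DC.mul (S.FE.rinner x y) d = S.DC.zero (S.Teq.σ t₀)) :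
    d = S.DC.zero (S.Teq.σ t₀) := by
  have hB := hS.fellC.toIsBanachBundle
  have husrc : S.𝒢K.src (S.Teq.σ t₀) = S.Teq.σ t₀ := hS.equivT.σ_unit t₀
  have hurng : S.𝒢K.rng (S.Teq.σ t₀) = S.Teq.σ t₀ := gpd_unit_rng husrc
  have huinv : S.𝒢K.inv (S.Teq.σ t₀) = S.Teq.σ t₀ := gpd_unit_inv husrc
  have humul : S.𝒢K.mul (S.Teq.σ t₀) (S.Teq.σ t₀) = S.Teq.σ t₀ := gpd_unit_mul husrc
  have hds : S.DC.proj (S.DC.star d) = S.Teq.σ t₀ := by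
    rw [hS.fellC.proj_star, hd, huinv]
  have hfull := hS.rinner_full t₀ (S.DC.star d) hds
  have key : ∀ ε > 0, S.DC.norm d ^ 2 ≤ ε * S.DC.norm d := by
    intro ε hε
    obtain ⟨l, hl, hn⟩ := hfull.2 ε hε
    have hlw : ∀ w ∈ l, S.DC.proj w = S.Teq.σ t₀ ∧
        S.DC.mul w d = S.DC.zero (S.𝒢K.mul (S.Teq.σ t₀) (S.DC.proj d)) := by
      intro w hw
      obtain ⟨x, y, hx, hy, rfl⟩ := hl w hw
      refine ⟨es_rinner_proj hS hx hy, ?_⟩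
      rw [hd, humul]
      exact h x y hx hy
    have hsum0 : S.DC.mul (S.DC.fibSum (S.Teq.σ t₀) l) d
        = S.DC.zero (S.𝒢K.mul (S.Teq.σ t₀) (S.DC.proj d)) :=
      fb_fibSum_mul hS.fellC _ d l (by rw [hd, hurng]; exact husrc) hlw
    rw [hd, humul] at hsum0
    have psum : S.DC.proj (S.DC.fibSum (S.Teq.σ t₀) l) = S.Teq.σ t₀ :=
      bb_proj_fibSum hB _ l (fun w hw => (hlw w hw).1)
    have hXp : S.DC.proj (S.DC.sub (S.DC.star d) (S.DC.fibSum (S.Teq.σ t₀) l))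
        = S.Teq.σ t₀ := by
      rw [bb_proj_sub hB (by rw [hds, psum])]; exact hds
    have hcomp : S.𝒢K.src (S.DC.proj (S.DC.sub (S.DC.star d)
        (S.DC.fibSum (S.Teq.σ t₀) l))) = S.𝒢K.rng (S.DC.proj d) := by
      rw [hXp, hd, hurng]; exact husrc
    have hmulexp : S.DC.mul (S.DC.star d) d
        = S.DC.mul (S.DC.sub (S.DC.star d) (S.DC.fibSum (S.Teq.σ t₀) l)) d := by
      conv_lhs => rw [← bb_add_sub_cancel hB (show S.DC.proj (S.DC.star d)
        = S.DC.proj (S.DC.fibSum (S.Teq.σ t₀) l) by rw [hds, psum])]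
      rw [hS.fellC.add_mul _ _ d (by rw [hXp, psum]) hcomp, hsum0]
      have hpm : S.DC.proj (S.DC.mul (S.DC.sub (S.DC.star d)
          (S.DC.fibSum (S.Teq.σ t₀) l)) d) = S.Teq.σ t₀ := by
        rw [hS.fellC.proj_mul _ _ hcomp, hXp, hd, humul]
      have := bb_add_zero hB (S.DC.mul (S.DC.sub (S.DC.star d)
        (S.DC.fibSum (S.Teq.σ t₀) l)) d)
      rwa [hpm] at this
    calc S.DC.norm d ^ 2 = S.DC.norm (S.DC.mul (S.DC.star d) d) :=
          (hS.fellC.norm_star_mul_self d).symm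
      _ = S.DC.norm (S.DC.mul (S.DC.sub (S.DC.star d)
          (S.DC.fibSum (S.Teq.σ t₀) l)) d) := by rw [hmulexp]
      _ ≤ S.DC.norm (S.DC.sub (S.DC.star d) (S.DC.fibSum (S.Teq.σ t₀) l))
          * S.DC.norm d := hS.fellC.norm_mul_le _ _ hcomp
      _ ≤ ε * S.DC.norm d :=
          mul_le_mul_of_nonneg_right hn.le (hB.norm_nonneg d)
  have h0 : S.DC.norm d = 0 := by
    by_contra hne
    have hpos : 0 < S.DC.norm d := lt_of_le_of_ne (hB.norm_nonneg d) (Ne.symm hne)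
    have hk := key (S.DC.norm d / 2) (by linarith)
    nlinarith
  have := hB.eq_zero_of_norm_eq_zero d h0
  rwa [hd] at this

lemma es_sep_left (t₀ : T) (d : BB) (hd : S.DB.proj d = S.Teq.ρ t₀)
    (h : ∀ x y, S.q x = t₀ → S.q y = t₀ →
      S.DB.mul d (S.FE.linner x y) = S.DB.zero (S.Teq.ρ t₀)) :
    d = S.DB.zero (S.Teq.ρ t₀) := by
  have hB := hS.fellB.toIsBanachBundle
  have husrc : S.𝒢H.src (S.Teq.ρ t₀) = S.Teq.ρ t₀ := hS.equivT.ρ_unit t₀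
  have hurng : S.𝒢H.rng (S.Teq.ρ t₀) = S.Teq.ρ t₀ := gpd_unit_rng husrc
  have huinv : S.𝒢H.inv (S.Teq.ρ t₀) = S.Teq.ρ t₀ := gpd_unit_inv husrc
  have humul : S.𝒢H.mul (S.Teq.ρ t₀) (S.Teq.ρ t₀) = S.Teq.ρ t₀ := gpd_unit_mul husrc
  have hds : S.DB.proj (S.DB.star d) = S.Teq.ρ t₀ := by
    rw [hS.fellB.proj_star, hd, huinv]
  have hfull := hS.linner_full t₀ (S.DB.star d) hds
  have key : ∀ ε > 0, S.DB.norm (S.DB.star d) ^ 2 ≤ S.DB.norm d * ε := by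
    intro ε hε
    obtain ⟨l, hl, hn⟩ := hfull.2 ε hε
    have hlw : ∀ w ∈ l, S.DB.proj w = S.Teq.ρ t₀ ∧
        S.DB.mul d w = S.DB.zero (S.𝒢H.mul (S.DB.proj d) (S.Teq.ρ t₀)) := by
      intro w hw
      obtain ⟨x, y, hx, hy, rfl⟩ := hl w hw
      refine ⟨es_linner_proj hS hx hy, ?_⟩
      rw [hd, humul]
      exact h x y hx hy
    have hsum0 : S.DB.mul d (S.DB.fibSum (S.Teq.ρ t₀) l)
        = S.DB.zero (S.𝒢H.mul (S.DB.proj d) (S.Teq.ρ t₀)) :=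
      fb_mul_fibSum hS.fellB d _ l (by rw [hd, hurng]; exact husrc) hlw
    rw [hd, humul] at hsum0
    have psum : S.DB.proj (S.DB.fibSum (S.Teq.ρ t₀) l) = S.Teq.ρ t₀ :=
      bb_proj_fibSum hB _ l (fun w hw => (hlw w hw).1)
    have hXp : S.DB.proj (S.DB.sub (S.DB.star d) (S.DB.fibSum (S.Teq.ρ t₀) l))
        = S.Teq.ρ t₀ := by
      rw [bb_proj_sub hB (by rw [hds, psum])]; exact hds
    have hcomp : S.𝒢H.src (S.DB.proj d) = S.𝒢H.rng (S.DB.proj (S.DB.sub (S.DB.star d)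
        (S.DB.fibSum (S.Teq.ρ t₀) l))) := by
      rw [hXp, hd, hurng]; exact husrc
    have hmulexp : S.DB.mul d (S.DB.star d)
        = S.DB.mul d (S.DB.sub (S.DB.star d) (S.DB.fibSum (S.Teq.ρ t₀) l)) := by
      conv_lhs => rw [← bb_add_sub_cancel hB (show S.DB.proj (S.DB.star d)
        = S.DB.proj (S.DB.fibSum (S.Teq.ρ t₀) l) by rw [hds, psum])]
      rw [hS.fellB.mul_add d _ _ (by rw [hXp, hd, hurng]; exact husrc) (by rw [hXp, psum]),
        hsum0]
      have hpm : S.DB.proj (S.DB.mul d (S.DB.sub (S.DB.star d)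
          (S.DB.fibSum (S.Teq.ρ t₀) l))) = S.Teq.ρ t₀ := by
        rw [hS.fellB.proj_mul _ _ hcomp, hXp, hd, humul]
      have := bb_add_zero hB (S.DB.mul d (S.DB.sub (S.DB.star d)
        (S.DB.fibSum (S.Teq.ρ t₀) l)))
      rwa [hpm] at this
    calc S.DB.norm (S.DB.star d) ^ 2
        = S.DB.norm (S.DB.mul (S.DB.star (S.DB.star d)) (S.DB.star d)) :=
          (hS.fellB.norm_star_mul_self (S.DB.star d)).symm
      _ = S.DB.norm (S.DB.mul d (S.DB.star d)) := by rw [hS.fellB.star_star]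
      _ = S.DB.norm (S.DB.mul d (S.DB.sub (S.DB.star d)
          (S.DB.fibSum (S.Teq.ρ t₀) l))) := by rw [hmulexp]
      _ ≤ S.DB.norm d * S.DB.norm (S.DB.sub (S.DB.star d)
          (S.DB.fibSum (S.Teq.ρ t₀) l)) := hS.fellB.norm_mul_le _ _ hcomp
      _ ≤ S.DB.norm d * ε :=
          mul_le_mul_of_nonneg_left hn.le (hB.norm_nonneg d)
  have h0 : S.DB.norm (S.DB.star d) = 0 := by
    by_contra hne
    have hpos : 0 < S.DB.norm (S.DB.star d) :=
      lt_of_le_of_ne (hB.norm_nonneg _) (Ne.symm hne)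
    have hNd : 0 ≤ S.DB.norm d := hB.norm_nonneg d
    have hε : 0 < S.DB.norm (S.DB.star d) ^ 2 / (S.DB.norm d + 1) := by positivity
    have hk := key _ hε
    rw [mul_div_assoc'] at hk
    rw [le_div_iff₀ (by linarith)] at hk
    nlinarith
  have hsz : S.DB.star d = S.DB.zero (S.Teq.ρ t₀) := by
    have := hB.eq_zero_of_norm_eq_zero _ h0
    rwa [hds] at this
  calc d = S.DB.star (S.DB.star d) := (hS.fellB.star_star d).symm
    _ = S.DB.star (S.DB.zero (S.Teq.ρ t₀)) := by rw [hsz]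
    _ = S.DB.zero (S.𝒢H.inv (S.Teq.ρ t₀)) := fb_star_zero hS.fellB _
    _ = S.DB.zero (S.Teq.ρ t₀) := by rw [huinv]

end Separation
section Adjoint

variable {H K T BB CC EE : Type*} [TopologicalSpace H] [TopologicalSpace K]
  [TopologicalSpace T] [TopologicalSpace BB] [TopologicalSpace CC] [TopologicalSpace EE]
  {S : EquivSetup H K T BB CC EE} (hS : S.IsFellEquiv)

set_option linter.unusedSectionVars false

include hS

/-- The adjoint identity `⟨e, b·f⟩_𝒞 = ⟨b*·e, f⟩_𝒞`. -/
lemma es_rinner_lact (b : BB) (e f : EE)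
    (hbf : S.𝒢H.src (S.DB.proj b) = S.Teq.ρ (S.q f))
    (he : S.q e = S.Teq.lact (S.DB.proj b) (S.q f)) :
    S.FE.rinner e (S.FE.lact b f) = S.FE.rinner (S.FE.lact (S.DB.star b) e) f := by
  set t₀ := S.q f with ht₀
  set t := S.Teq.lact (S.DB.proj b) t₀ with ht
  have husrcK : S.𝒢K.src (S.Teq.σ t₀) = S.Teq.σ t₀ := hS.equivT.σ_unit t₀
  have hqbf : S.q (S.FE.lact b f) = t := by rw [hS.proj_lact b f hbf]
  have hρt : S.Teq.ρ t = S.𝒢H.rng (S.DB.proj b) := hS.equivT.ρ_lact _ t₀ hbf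
  have hσt : S.Teq.σ t = S.Teq.σ t₀ := hS.equivT.σ_lact _ t₀ hbf
  have hpstar : S.DB.proj (S.DB.star b) = S.𝒢H.inv (S.DB.proj b) := hS.fellB.proj_star b
  have hsrcinv : S.𝒢H.src (S.𝒢H.inv (S.DB.proj b)) = S.𝒢H.rng (S.DB.proj b) :=
    S.𝒢H.src_inv _
  have hce' : S.𝒢H.src (S.DB.proj (S.DB.star b)) = S.Teq.ρ (S.q e) := by
    rw [hpstar, hsrcinv, he, hρt]
  have hqe' : S.q (S.FE.lact (S.DB.star b) e) = t₀ := by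
    rw [hS.proj_lact _ e hce', hpstar, he, ht,
      ← hS.equivT.lact_mul (S.𝒢H.inv (S.DB.proj b)) (S.DB.proj b) t₀ hsrcinv hbf,
      S.𝒢H.inv_mul, hbf]
    exact hS.equivT.lact_id t₀
  have projA1 : S.DC.proj (S.FE.rinner e (S.FE.lact b f)) = S.Teq.σ t :=
    es_rinner_proj hS he hqbf
  have projA2 : S.DC.proj (S.FE.rinner (S.FE.lact (S.DB.star b) e) f) = S.Teq.σ t₀ :=
    es_rinner_proj hS hqe' ht₀.symm
  have hprojeq : S.DC.proj (S.FE.rinner e (S.FE.lact b f))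
      = S.DC.proj (S.FE.rinner (S.FE.lact (S.DB.star b) e) f) := by
    rw [projA1, projA2, hσt]
  have hτ1src : S.𝒢H.src (S.Teq.τH t t₀) = S.Teq.ρ t₀ := hS.equivT.τH_src t t₀ hσt
  have hτ1spec : S.Teq.lact (S.Teq.τH t t₀) t₀ = t := hS.equivT.τH_spec t t₀ hσt
  have hτ1rng : S.𝒢H.rng (S.Teq.τH t t₀) = S.Teq.ρ t := by
    have := hS.equivT.ρ_lact (S.Teq.τH t t₀) t₀ hτ1src
    rw [hτ1spec] at this
    exact this.symm
  have hτ2src : S.𝒢H.src (S.Teq.τH t₀ t) = S.Teq.ρ t := hS.equivT.τH_src t₀ t hσt.symm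
  have hforall : ∀ x y, S.q x = t₀ → S.q y = t₀ →
      S.DC.mul (S.FE.rinner x y)
        (S.DC.sub (S.FE.rinner e (S.FE.lact b f))
          (S.FE.rinner (S.FE.lact (S.DB.star b) e) f)) = S.DC.zero (S.Teq.σ t₀) := by
    intro x y hx hy
    have hσye : S.Teq.σ (S.q y) = S.Teq.σ (S.q e) := by rw [hy, he, hσt]
    have hσey : S.Teq.σ (S.q e) = S.Teq.σ (S.q y) := hσye.symm
    have hplin_ey : S.DB.proj (S.FE.linner e y) = S.Teq.τH t t₀ := by
      rw [hS.proj_linner e y hσey, he, hy]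
    have hplin_ye : S.DB.proj (S.FE.linner y e) = S.Teq.τH t₀ t := by
      rw [hS.proj_linner y e hσye, he, hy]
    have step1 : S.FE.linner (S.FE.lact (S.DB.star b) e) y
        = S.DB.mul (S.DB.star b) (S.FE.linner e y) :=
      hS.linner_lact (S.DB.star b) e y hce' hσey
    have step2 : S.DB.star (S.FE.linner (S.FE.lact (S.DB.star b) e) y)
        = S.FE.linner y (S.FE.lact (S.DB.star b) e) :=
      hS.linner_star _ y (by rw [hqe', hy])
    have step3 : S.DB.star (S.DB.mul (S.DB.star b) (S.FE.linner e y))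
        = S.DB.mul (S.DB.star (S.FE.linner e y)) (S.DB.star (S.DB.star b)) :=
      hS.fellB.star_mul' (S.DB.star b) (S.FE.linner e y)
        (by rw [hpstar, hsrcinv, hplin_ey, hτ1rng, hρt])
    have step4 : S.DB.star (S.FE.linner e y) = S.FE.linner y e :=
      hS.linner_star e y hσey
    have hlin : S.FE.linner y (S.FE.lact (S.DB.star b) e)
        = S.DB.mul (S.FE.linner y e) b := by
      rw [← step2, step1, step3, step4, hS.fellB.star_star]
    have hractA1 : S.FE.ract y (S.FE.rinner e (S.FE.lact b f))
        = S.FE.lact (S.DB.mul (S.FE.linner y e) b) f := by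
      rw [← hS.imprim y e (S.FE.lact b f) (by rw [hy, he, hσt]) (by rw [he, hqbf]),
        ← hS.lact_lact (S.FE.linner y e) b f (by rw [hplin_ye, hτ2src, hρt]) hbf]
    have hractA2 : S.FE.ract y (S.FE.rinner (S.FE.lact (S.DB.star b) e) f)
        = S.FE.lact (S.DB.mul (S.FE.linner y e) b) f := by
      rw [← hS.imprim y (S.FE.lact (S.DB.star b) e) f (by rw [hy, hqe'])
        (by rw [hqe']), hlin]
    have hmA1 : S.DC.mul (S.FE.rinner x y) (S.FE.rinner e (S.FE.lact b f))
        = S.FE.rinner x (S.FE.ract y (S.FE.rinner e (S.FE.lact b f))) := by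
      refine (hS.rinner_ract x y _ (by rw [hx, hy]) ?_).symm
      rw [hy, projA1, hσt]
      exact (gpd_unit_rng husrcK).symm
    have hmA2 : S.DC.mul (S.FE.rinner x y) (S.FE.rinner (S.FE.lact (S.DB.star b) e) f)
        = S.FE.rinner x (S.FE.ract y (S.FE.rinner (S.FE.lact (S.DB.star b) e) f)) := by
      refine (hS.rinner_ract x y _ (by rw [hx, hy]) ?_).symm
      rw [hy, projA2]
      exact (gpd_unit_rng husrcK).symm
    have hprxy : S.DC.proj (S.FE.rinner x y) = S.Teq.σ t₀ := es_rinner_proj hS hx hy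
    have hcompz : S.𝒢K.src (S.DC.proj (S.FE.rinner x y))
        = S.𝒢K.rng (S.DC.proj (S.FE.rinner e (S.FE.lact b f))) := by
      rw [hprxy, projA1, hσt, husrcK, gpd_unit_rng husrcK]
    have hcompz2 : S.𝒢K.src (S.DC.proj (S.FE.rinner x y))
        = S.𝒢K.rng (S.DC.proj (S.FE.rinner (S.FE.lact (S.DB.star b) e) f)) := by
      rw [hprxy, projA2, husrcK, gpd_unit_rng husrcK]
    have heq : S.DC.mul (S.FE.rinner x y) (S.FE.rinner e (S.FE.lact b f))
        = S.DC.mul (S.FE.rinner x y) (S.FE.rinner (S.FE.lact (S.DB.star b) e) f) := by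
      rw [hmA1, hmA2, hractA1, hractA2]
    rw [fb_mul_sub_right hS.fellC _ _ _ hprojeq hcompz, heq,
      bb_sub_self hS.fellC.toIsBanachBundle]
    congr 1
    rw [hS.fellC.proj_mul _ _ hcompz2, hprxy, projA2, gpd_unit_mul husrcK]
  refine bb_eq_of_sub_eq_zero hS.fellC.toIsBanachBundle hprojeq ?_
  rw [projA1, hσt]
  exact es_sep_right hS t₀ _
    (by rw [bb_proj_sub hS.fellC.toIsBanachBundle hprojeq, projA1, hσt]) hforall

/-- The adjoint identity `⟨f·c, e⟩_ℬ = ⟨f, e·c*⟩_ℬ`. -/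
lemma es_linner_ract (c : CC) (f e : EE)
    (hfc : S.Teq.σ (S.q f) = S.𝒢K.rng (S.DC.proj c))
    (he : S.q e = S.Teq.ract (S.q f) (S.DC.proj c)) :
    S.FE.linner (S.FE.ract f c) e = S.FE.linner f (S.FE.ract e (S.DC.star c)) := by
  set t' := S.q f with ht'
  set t := S.Teq.ract t' (S.DC.proj c) with ht
  have husrcH : S.𝒢H.src (S.Teq.ρ t') = S.Teq.ρ t' := hS.equivT.ρ_unit t'
  have hqfc : S.q (S.FE.ract f c) = t := by rw [hS.proj_ract f c hfc]
  have hσt : S.Teq.σ t = S.𝒢K.src (S.DC.proj c) := hS.equivT.σ_ract t' _ hfc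
  have hρt : S.Teq.ρ t = S.Teq.ρ t' := hS.equivT.ρ_ract t' _ hfc
  have hpstar : S.DC.proj (S.DC.star c) = S.𝒢K.inv (S.DC.proj c) := hS.fellC.proj_star c
  have hrnginv : S.𝒢K.rng (S.𝒢K.inv (S.DC.proj c)) = S.𝒢K.src (S.DC.proj c) :=
    S.𝒢K.rng_inv _
  have hcee : S.Teq.σ (S.q e) = S.𝒢K.rng (S.DC.proj (S.DC.star c)) := by
    rw [he, hpstar, hrnginv]; exact hσt
  have hqe' : S.q (S.FE.ract e (S.DC.star c)) = t' := by
    rw [hS.proj_ract e _ hcee, hpstar, he, ht,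
      ← hS.equivT.ract_mul t' (S.DC.proj c) (S.𝒢K.inv (S.DC.proj c)) hfc
        (S.𝒢K.rng_inv _).symm, S.𝒢K.mul_inv, ← hfc]
    exact hS.equivT.ract_id t'
  have projA1 : S.DB.proj (S.FE.linner (S.FE.ract f c) e) = S.Teq.ρ t :=
    es_linner_proj hS hqfc he
  have projA2 : S.DB.proj (S.FE.linner f (S.FE.ract e (S.DC.star c))) = S.Teq.ρ t' :=
    es_linner_proj hS ht'.symm hqe'
  have hprojeq : S.DB.proj (S.FE.linner (S.FE.ract f c) e)
      = S.DB.proj (S.FE.linner f (S.FE.ract e (S.DC.star c))) := by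
    rw [projA1, projA2, hρt]
  have hk1rng : S.𝒢K.rng (S.Teq.τK t t') = S.Teq.σ t := hS.equivT.τK_rng t t' hρt
  have hk2rng : S.𝒢K.rng (S.Teq.τK t' t) = S.Teq.σ t' := hS.equivT.τK_rng t' t hρt.symm
  have hk2spec : S.Teq.ract t' (S.Teq.τK t' t) = t := hS.equivT.τK_spec t' t hρt.symm
  have hk2src : S.𝒢K.src (S.Teq.τK t' t) = S.Teq.σ t := by
    have := hS.equivT.σ_ract t' (S.Teq.τK t' t) hk2rng.symm
    rw [hk2spec] at this
    exact this.symm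
  have hforall : ∀ x y, S.q x = t' → S.q y = t' →
      S.DB.mul (S.DB.sub (S.FE.linner (S.FE.ract f c) e)
          (S.FE.linner f (S.FE.ract e (S.DC.star c)))) (S.FE.linner x y)
        = S.DB.zero (S.Teq.ρ t') := by
    intro x y hx hy
    have hρxe : S.Teq.ρ (S.q x) = S.Teq.ρ (S.q e) := by rw [hx, he, hρt]
    have hrin : S.FE.rinner (S.FE.ract e (S.DC.star c)) x
        = S.DC.mul c (S.FE.rinner e x) := by
      have s1 : S.FE.rinner x (S.FE.ract e (S.DC.star c))
          = S.DC.mul (S.FE.rinner x e) (S.DC.star c) :=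
        hS.rinner_ract x e (S.DC.star c) hρxe hcee
      have s2 : S.DC.star (S.FE.rinner x (S.FE.ract e (S.DC.star c)))
          = S.FE.rinner (S.FE.ract e (S.DC.star c)) x :=
        hS.rinner_star x _ (by rw [hx, hqe'])
      have hpxe : S.DC.proj (S.FE.rinner x e) = S.Teq.τK t' t := by
        rw [hS.proj_rinner x e hρxe, hx, he]
      have s3 : S.DC.star (S.DC.mul (S.FE.rinner x e) (S.DC.star c))
          = S.DC.mul (S.DC.star (S.DC.star c)) (S.DC.star (S.FE.rinner x e)) :=
        hS.fellC.star_mul' (S.FE.rinner x e) (S.DC.star c)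
          (by rw [hpxe, hk2src, hpstar, S.𝒢K.rng_inv, hσt])
      have s4 : S.DC.star (S.FE.rinner x e) = S.FE.rinner e x :=
        hS.rinner_star x e hρxe
      rw [← s2, s1, s3, s4, hS.fellC.star_star]
    have hpex : S.DC.proj (S.FE.rinner e x) = S.Teq.τK t t' := by
      rw [hS.proj_rinner e x hρxe.symm, hx, he]
    have hlactA1 : S.FE.lact (S.FE.linner (S.FE.ract f c) e) x
        = S.FE.ract f (S.DC.mul c (S.FE.rinner e x)) := by
      rw [hS.imprim (S.FE.ract f c) e x (by rw [hqfc, he]) (by rw [he, hx]; exact hρt),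
        ← hS.ract_ract f c (S.FE.rinner e x) hfc (by rw [hpex, hk1rng, hσt])]
    have hlactA2 : S.FE.lact (S.FE.linner f (S.FE.ract e (S.DC.star c))) x
        = S.FE.ract f (S.DC.mul c (S.FE.rinner e x)) := by
      rw [hS.imprim f (S.FE.ract e (S.DC.star c)) x (by rw [hqe'])
        (by rw [hqe', hx]), hrin]
    have hmA1 : S.DB.mul (S.FE.linner (S.FE.ract f c) e) (S.FE.linner x y)
        = S.FE.linner (S.FE.lact (S.FE.linner (S.FE.ract f c) e) x) y := by
      refine (hS.linner_lact _ x y ?_ (by rw [hx, hy])).symm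
      rw [projA1, hx, hρt]
      exact husrcH
    have hmA2 : S.DB.mul (S.FE.linner f (S.FE.ract e (S.DC.star c))) (S.FE.linner x y)
        = S.FE.linner (S.FE.lact (S.FE.linner f (S.FE.ract e (S.DC.star c))) x) y := by
      refine (hS.linner_lact _ x y ?_ (by rw [hx, hy])).symm
      rw [projA2, hx]
      exact husrcH
    have hpz : S.DB.proj (S.FE.linner x y) = S.Teq.ρ t' := es_linner_proj hS hx hy
    have hcompz : S.𝒢H.src (S.DB.proj (S.FE.linner (S.FE.ract f c) e))
        = S.𝒢H.rng (S.DB.proj (S.FE.linner x y)) := by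
      rw [projA1, hpz, hρt, husrcH, gpd_unit_rng husrcH]
    have hcompz2 : S.𝒢H.src (S.DB.proj (S.FE.linner f (S.FE.ract e (S.DC.star c))))
        = S.𝒢H.rng (S.DB.proj (S.FE.linner x y)) := by
      rw [projA2, hpz, husrcH, gpd_unit_rng husrcH]
    have heq : S.DB.mul (S.FE.linner (S.FE.ract f c) e) (S.FE.linner x y)
        = S.DB.mul (S.FE.linner f (S.FE.ract e (S.DC.star c))) (S.FE.linner x y) := by
      rw [hmA1, hmA2, hlactA1, hlactA2]
    rw [fb_sub_mul_left hS.fellB _ _ _ hprojeq hcompz, heq,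
      bb_sub_self hS.fellB.toIsBanachBundle]
    congr 1
    rw [hS.fellB.proj_mul _ _ hcompz2, hpz, projA2, gpd_unit_mul husrcH]
  refine bb_eq_of_sub_eq_zero hS.fellB.toIsBanachBundle hprojeq ?_
  rw [projA1, hρt]
  exact es_sep_left hS t' _
    (by rw [bb_proj_sub hS.fellB.toIsBanachBundle hprojeq, projA1, hρt]) hforall

end Adjoint
section Transfer

variable {H K T BB CC EE : Type*} [TopologicalSpace H] [TopologicalSpace K]
  [TopologicalSpace T] [TopologicalSpace BB] [TopologicalSpace CC] [TopologicalSpace EE]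
  {S : EquivSetup H K T BB CC EE} (hS : S.IsFellEquiv)

set_option linter.unusedSectionVars false

include hS

lemma es_q_lact_star (b : BB) (e f : EE)
    (hbf : S.𝒢H.src (S.DB.proj b) = S.Teq.ρ (S.q f))
    (he : S.q e = S.Teq.lact (S.DB.proj b) (S.q f)) :
    S.q (S.FE.lact (S.DB.star b) e) = S.q f := by
  have hρt : S.Teq.ρ (S.Teq.lact (S.DB.proj b) (S.q f)) = S.𝒢H.rng (S.DB.proj b) :=
    hS.equivT.ρ_lact _ _ hbf
  have hpstar : S.DB.proj (S.DB.star b) = S.𝒢H.inv (S.DB.proj b) := hS.fellB.proj_star b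
  have hsrcinv : S.𝒢H.src (S.𝒢H.inv (S.DB.proj b)) = S.𝒢H.rng (S.DB.proj b) :=
    S.𝒢H.src_inv _
  have hce' : S.𝒢H.src (S.DB.proj (S.DB.star b)) = S.Teq.ρ (S.q e) := by
    rw [hpstar, hsrcinv, he, hρt]
  rw [hS.proj_lact _ e hce', hpstar, he,
    ← hS.equivT.lact_mul (S.𝒢H.inv (S.DB.proj b)) (S.DB.proj b) (S.q f) hsrcinv hbf,
    S.𝒢H.inv_mul, hbf]
  exact hS.equivT.lact_id (S.q f)

lemma es_q_ract_star (c : CC) (f e : EE)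
    (hfc : S.Teq.σ (S.q f) = S.𝒢K.rng (S.DC.proj c))
    (he : S.q e = S.Teq.ract (S.q f) (S.DC.proj c)) :
    S.q (S.FE.ract e (S.DC.star c)) = S.q f := by
  have hσt : S.Teq.σ (S.Teq.ract (S.q f) (S.DC.proj c)) = S.𝒢K.src (S.DC.proj c) :=
    hS.equivT.σ_ract _ _ hfc
  have hpstar : S.DC.proj (S.DC.star c) = S.𝒢K.inv (S.DC.proj c) := hS.fellC.proj_star c
  have hcee : S.Teq.σ (S.q e) = S.𝒢K.rng (S.DC.proj (S.DC.star c)) := by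
    rw [he, hpstar, S.𝒢K.rng_inv]; exact hσt
  rw [hS.proj_ract e _ hcee, hpstar, he,
    ← hS.equivT.ract_mul (S.q f) (S.DC.proj c) (S.𝒢K.inv (S.DC.proj c)) hfc
      (S.𝒢K.rng_inv _).symm, S.𝒢K.mul_inv, ← hfc]
  exact hS.equivT.ract_id (S.q f)

lemma es_rIdeal_subset (M : Set EE) (hM : S.IsFullBCSubmodule M) (t t' : T)
    (hσ : S.Teq.σ t = S.Teq.σ t') : S.rIdeal M t ⊆ S.rIdeal M t' := by
  have hB := hS.fellC.toIsBanachBundle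
  intro cc hcc
  show cc ∈ fibSpanApprox S.DC.toBanachBundleData (S.Teq.σ t')
    (fun w => ∃ e m, S.q e = t' ∧ m ∈ M ∧ S.q m = t' ∧ w = S.FE.rinner e m)
  rw [← hσ]
  refine bb_spanApprox_trans hB (S.Teq.σ t)
    (fun w hw => ?_) (fun w hw => ?_) hcc
  · -- P' elements live in the fibre over σ t
    obtain ⟨e, m, he, hm, hmt, rfl⟩ := hw
    rw [es_rinner_proj hS he hmt, hσ]
  · -- each ⟨e, m⟩ with e, m over t is approximable over t'
    obtain ⟨e, m, he, hm, hmt, rfl⟩ := hw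
    have hsrc : S.𝒢H.src (S.Teq.τH t t') = S.Teq.ρ t' := hS.equivT.τH_src t t' hσ
    have hlact : S.Teq.lact (S.Teq.τH t t') t' = t := hS.equivT.τH_spec t t' hσ
    have hmem : m ∈ fibSpanApprox S.FE.bund t
        (fun w => ∃ b m', S.DB.proj b = S.Teq.τH t t' ∧ m' ∈ M ∧ S.q m' = t'
          ∧ w = S.FE.lact b m') := by
      have h0 := hM.lfull (S.Teq.τH t t') t' hsrc
      rw [hlact] at h0
      rw [← h0]
      exact ⟨hm, hmt⟩
    have hPmq : ∀ z, (∃ b m', S.DB.proj b = S.Teq.τH t t' ∧ m' ∈ M ∧ S.q m' = t'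
        ∧ z = S.FE.lact b m') → S.q z = t := by
      rintro z ⟨b, m', hb, hm', hm't, rfl⟩
      rw [hS.proj_lact b m' (by rw [hb, hm't]; exact hsrc), hb, hm't, hlact]
    have hseq : ∀ n : ℕ, ∃ ln : List EE,
        (∀ z ∈ ln, ∃ b m', S.DB.proj b = S.Teq.τH t t' ∧ m' ∈ M ∧ S.q m' = t'
          ∧ z = S.FE.lact b m') ∧
        S.FE.bund.norm (S.FE.bund.sub m (S.FE.bund.fibSum t ln)) < 1 / ((n : ℝ) + 1) :=
      fun n => hmem.2 (1 / ((n : ℝ) + 1)) (by positivity)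
    choose l hl hln using hseq
    have hql : ∀ n, ∀ z ∈ l n, S.q z = t := fun n z hz => hPmq z (hl n z hz)
    have hfs : ∀ n, S.FE.bund.proj (S.FE.bund.fibSum t (l n)) = t :=
      fun n => bb_proj_fibSum hS.bund t (l n) (hql n)
    have hqd : ∀ n, S.q (S.FE.bund.sub m (S.FE.bund.fibSum t (l n))) = t := by
      intro n
      have := bb_proj_sub hS.bund (a := m) (b := S.FE.bund.fibSum t (l n))
        (by rw [hfs n]; exact hmt)
      exact this.trans hmt
    have hnormd : Tendsto
        (fun n => S.FE.bund.norm (S.FE.bund.sub m (S.FE.bund.fibSum t (l n))))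
        atTop (𝓝 0) :=
      squeeze_zero (fun n => hS.bund.norm_nonneg _) (fun n => (hln n).le)
        tendsto_one_div_add_atTop_nhds_zero_nat
    have hsmall := es_rinner_small hS e t he _ hqd hnormd
    refine ⟨es_rinner_proj hS he hmt, fun ε hε => ?_⟩
    obtain ⟨n, hn⟩ := hsmall ε hε
    refine ⟨(l n).map (fun z => S.FE.rinner e z), ?_, ?_⟩
    · intro w hw
      rw [List.mem_map] at hw
      obtain ⟨z, hz, rfl⟩ := hw
      obtain ⟨b, m', hb, hm', hm't, rfl⟩ := hl n z hz
      have hbf : S.𝒢H.src (S.DB.proj b) = S.Teq.ρ (S.q m') := by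
        rw [hb, hm't]; exact hsrc
      have he2 : S.q e = S.Teq.lact (S.DB.proj b) (S.q m') := by
        rw [he, hb, hm't]; exact hlact.symm
      refine ⟨S.FE.lact (S.DB.star b) e, m', ?_, hm', hm't, ?_⟩
      · rw [es_q_lact_star hS b e m' hbf he2, hm't]
      · exact es_rinner_lact hS b e m' hbf he2
    · have h1 : S.FE.rinner e (S.FE.bund.fibSum t (l n))
          = S.DC.fibSum (S.Teq.σ t) ((l n).map (fun z => S.FE.rinner e z)) :=
        es_rinner_fibSum_right hS he (l n) (hql n)
      have h2 : S.DC.sub (S.FE.rinner e m)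
          (S.DC.fibSum (S.Teq.σ t) ((l n).map (fun z => S.FE.rinner e z)))
          = S.FE.rinner e (S.FE.bund.sub m (S.FE.bund.fibSum t (l n))) := by
        rw [← h1]
        exact (es_rinner_sub_right hS he hmt (hfs n)).symm
      rw [h2]
      exact hn

lemma es_lIdeal_subset (M : Set EE) (hM : S.IsFullBCSubmodule M) (t t' : T)
    (hρ : S.Teq.ρ t = S.Teq.ρ t') : S.lIdeal M t ⊆ S.lIdeal M t' := by
  have hB := hS.fellB.toIsBanachBundle
  intro bb hbb
  show bb ∈ fibSpanApprox S.DB.toBanachBundleData (S.Teq.ρ t')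
    (fun w => ∃ m e, m ∈ M ∧ S.q m = t' ∧ S.q e = t' ∧ w = S.FE.linner m e)
  rw [← hρ]
  refine bb_spanApprox_trans hB (S.Teq.ρ t)
    (fun w hw => ?_) (fun w hw => ?_) hbb
  · obtain ⟨m, e, hm, hmt, he, rfl⟩ := hw
    rw [es_linner_proj hS hmt he, hρ]
  · obtain ⟨m, e, hm, hmt, he, rfl⟩ := hw
    have hrng : S.𝒢K.rng (S.Teq.τK t' t) = S.Teq.σ t' := hS.equivT.τK_rng t' t hρ.symm
    have hract : S.Teq.ract t' (S.Teq.τK t' t) = t := hS.equivT.τK_spec t' t hρ.symm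
    have hmem : m ∈ fibSpanApprox S.FE.bund t
        (fun w => ∃ m' c, m' ∈ M ∧ S.q m' = t' ∧ S.DC.proj c = S.Teq.τK t' t
          ∧ w = S.FE.ract m' c) := by
      have h0 := hM.rfull t' (S.Teq.τK t' t) hrng.symm
      rw [hract] at h0
      rw [← h0]
      exact ⟨hm, hmt⟩
    have hPmq : ∀ z, (∃ m' c, m' ∈ M ∧ S.q m' = t' ∧ S.DC.proj c = S.Teq.τK t' t
        ∧ z = S.FE.ract m' c) → S.q z = t := by
      rintro z ⟨m', c, hm', hm't, hc, rfl⟩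
      rw [hS.proj_ract m' c (by rw [hc, hm't]; exact hrng.symm), hc, hm't, hract]
    have hseq : ∀ n : ℕ, ∃ ln : List EE,
        (∀ z ∈ ln, ∃ m' c, m' ∈ M ∧ S.q m' = t' ∧ S.DC.proj c = S.Teq.τK t' t
          ∧ z = S.FE.ract m' c) ∧
        S.FE.bund.norm (S.FE.bund.sub m (S.FE.bund.fibSum t ln)) < 1 / ((n : ℝ) + 1) :=
      fun n => hmem.2 (1 / ((n : ℝ) + 1)) (by positivity)
    choose l hl hln using hseq
    have hql : ∀ n, ∀ z ∈ l n, S.q z = t := fun n z hz => hPmq z (hl n z hz)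
    have hfs : ∀ n, S.FE.bund.proj (S.FE.bund.fibSum t (l n)) = t :=
      fun n => bb_proj_fibSum hS.bund t (l n) (hql n)
    have hqd : ∀ n, S.q (S.FE.bund.sub m (S.FE.bund.fibSum t (l n))) = t := by
      intro n
      have := bb_proj_sub hS.bund (a := m) (b := S.FE.bund.fibSum t (l n))
        (by rw [hfs n]; exact hmt)
      exact this.trans hmt
    have hnormd : Tendsto
        (fun n => S.FE.bund.norm (S.FE.bund.sub m (S.FE.bund.fibSum t (l n))))
        atTop (𝓝 0) :=
      squeeze_zero (fun n => hS.bund.norm_nonneg _) (fun n => (hln n).le)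
        tendsto_one_div_add_atTop_nhds_zero_nat
    have hsmall := es_linner_small hS e t he _ hqd hnormd
    refine ⟨es_linner_proj hS hmt he, fun ε hε => ?_⟩
    obtain ⟨n, hn⟩ := hsmall ε hε
    refine ⟨(l n).map (fun z => S.FE.linner z e), ?_, ?_⟩
    · intro w hw
      rw [List.mem_map] at hw
      obtain ⟨z, hz, rfl⟩ := hw
      obtain ⟨m', c, hm', hm't, hc, rfl⟩ := hl n z hz
      have hfc : S.Teq.σ (S.q m') = S.𝒢K.rng (S.DC.proj c) := by
        rw [hc, hm't]; exact hrng.symm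
      have he2 : S.q e = S.Teq.ract (S.q m') (S.DC.proj c) := by
        rw [he, hc, hm't]; exact hract.symm
      refine ⟨m', S.FE.ract e (S.DC.star c), hm', hm't, ?_, ?_⟩
      · rw [es_q_ract_star hS c m' e hfc he2, hm't]
      · exact es_linner_ract hS c m' e hfc he2
    · have h1 : S.FE.linner (S.FE.bund.fibSum t (l n)) e
          = S.DB.fibSum (S.Teq.ρ t) ((l n).map (fun z => S.FE.linner z e)) :=
        es_linner_fibSum_left hS he (l n) (hql n)
      have h2 : S.DB.sub (S.FE.linner m e)
          (S.DB.fibSum (S.Teq.ρ t) ((l n).map (fun z => S.FE.linner z e)))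
          = S.FE.linner (S.FE.bund.sub m (S.FE.bund.fibSum t (l n))) e := by
        rw [← h1]
        exact (es_linner_sub_left hS he hmt (hfs n)).symm
      rw [h2]
      exact hn

end Transfer

/-- **Lemma 3.6**: if `ℳ` is a full Banach `ℬ`–`𝒞` submodule of `ℰ`, then the ideal
`R_t = closure span ⟨E_t, M_t⟩_𝒞` of `C_{σ(t)}` depends only on `σ(t)`, and the ideal
`L_t = closure span ⟨M_t, E_t⟩_ℬ` of `B_{ρ(t)}` depends only on `ρ(t)`. -/
theorem rIdeal_lIdeal_depend_only_on_moment_maps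
    (H K T BB CC EE : Type*) [TopologicalSpace H] [T2Space H] [LocallyCompactSpace H]
    [SecondCountableTopology H] [TopologicalSpace K] [T2Space K] [LocallyCompactSpace K]
    [SecondCountableTopology K] [TopologicalSpace T] [T2Space T] [LocallyCompactSpace T]
    [SecondCountableTopology T] [TopologicalSpace BB] [TopologicalSpace CC]
    [TopologicalSpace EE]
    (S : EquivSetup H K T BB CC EE) (hS : S.IsFellEquiv)
    (M : Set EE) (hM : S.IsFullBCSubmodule M) (t t' : T) :
    (S.Teq.σ t = S.Teq.σ t' → S.rIdeal M t = S.rIdeal M t') ∧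
    (S.Teq.ρ t = S.Teq.ρ t' → S.lIdeal M t = S.lIdeal M t') := by
  constructor
  · intro hσ
    exact Set.Subset.antisymm (es_rIdeal_subset hS M hM t t' hσ)
      (es_rIdeal_subset hS M hM t' t hσ.symm)
  · intro hρ
    exact Set.Subset.antisymm (es_lIdeal_subset hS M hM t t' hρ)
      (es_lIdeal_subset hS M hM t' t hρ.symm)

end FellRieffel
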